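/- arXiv:2404.16438 — 8 statements merged into one kernel-verified Lean document; each statement's English description precedes it below -/
import Mathlib

section
/- Let N ≥ 1, 1 ≤ p₀ < ∞, and let V ∈ L^{p₀}_U(ℝ^N) be such that translations of V are continuous in the L^{p₀}_U(ℝ^N) norm, i.e. ‖τ_y V − V‖_{L^{p₀}_U(ℝ^N)} → 0 as |y| → 0, where τ_y V(x) := V(x − y). Then V can be approximated in L^{p₀}_U(ℝ^N) by bounded functions. -/
open MeasureTheory Metric Filter ENNReal

/-- The locally uniform `L^p` norm: `sup_{x₀} ‖V‖_{L^p(B(x₀,1))}`. -/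
noncomputable def locUnifNorm {N : ℕ} (p : ℝ) (V : EuclideanSpace ℝ (Fin N) → ℝ) : ℝ≥0∞ :=
  ⨆ x₀ : EuclideanSpace ℝ (Fin N),
    eLpNorm V (ENNReal.ofReal p) (volume.restrict (ball x₀ 1))

/-- `V` can be approximated in `L^p_U(ℝ^N)` by bounded functions. -/
def ApproxByBounded {N : ℕ} (p : ℝ) (V : EuclideanSpace ℝ (Fin N) → ℝ) : Prop :=
  ∀ ε : ℝ, 0 < ε → ∃ W : EuclideanSpace ℝ (Fin N) → ℝ, Measurable W ∧
    (∃ C : ℝ, ∀ᵐ y ∂(volume : Measure (EuclideanSpace ℝ (Fin N))), |W y| ≤ C) ∧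
    locUnifNorm p (V - W) < ENNReal.ofReal ε

/-!
Replace `V` by its mean over small balls, `W x = ⨍_{B(0,δ)} V (x - y) dy`. Hölder's inequality
on unit balls bounds the local `L¹` mass of `V` by its `L^p_U` norm, so `W` is bounded. On the
other hand `V x - W x` is the mean of `V x - V (x - y)` over `y ∈ B(0,δ)`; Jensen's inequality
and Tonelli's theorem bound `‖V - W‖_{L^p(B(x₀,1))}` by the supremum over `|y| < δ` of
`‖τ_y V - V‖_{L^p_U}`, which is small by continuity of translations.
-/

open ProbabilityTheory

theorem norm_integral_le_toReal_of_lintegral_enorm_le {α F : Type*} [MeasurableSpace α]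
    [NormedAddCommGroup F] [NormedSpace ℝ F] {μ : Measure α} {f : α → F} {C : ℝ≥0∞}
    (hC : C ≠ ∞) (h : ∫⁻ a, ‖f a‖ₑ ∂μ ≤ C) :
    ‖∫ a, f a ∂μ‖ ≤ C.toReal :=
  (norm_integral_le_lintegral_norm f).trans (toReal_mono hC (by simpa only [ofReal_norm] using h))

theorem eLpNorm_sub_integral_translate_le {G : Type*} [AddGroup G] [MeasurableSpace G]
    [MeasurableSub₂ G] {π ν : Measure G} [IsProbabilityMeasure π] [SFinite ν] {p : ℝ≥0∞}
    (hp : 1 ≤ p) (hp_top : p ≠ ∞) {V : G → ℝ} (hV : Measurable V)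
    (hint : ∀ x, Integrable (fun y => V (x - y)) π) {A : ℝ≥0∞}
    (hA : ∀ᵐ y ∂π, eLpNorm (fun x => V (x - y) - V x) p ν ≤ A) :
    eLpNorm (fun x => V x - ∫ y, V (x - y) ∂π) p ν ≤ A := by
  have hq : 1 ≤ p.toReal := by simpa using ENNReal.toReal_mono hp_top hp
  have hq0 : 0 < p.toReal := one_pos.trans_le hq
  have hp0 : p ≠ 0 := (one_pos.trans_le hp).ne'
  rw [eLpNorm_eq_eLpNorm' hp0 hp_top]
  simp_rw [eLpNorm_eq_eLpNorm' hp0 hp_top] at hA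
  have hpoint : ∀ x, ‖V x - ∫ y, V (x - y) ∂π‖ₑ ≤
      eLpNorm' (fun y => V x - V (x - y)) p.toReal π := by
    intro x
    calc ‖V x - ∫ y, V (x - y) ∂π‖ₑ = ‖∫ y, (V x - V (x - y)) ∂π‖ₑ := by
          rw [integral_sub (integrable_const _) (hint x), integral_const, probReal_univ, one_smul]
      _ ≤ ∫⁻ y, ‖V x - V (x - y)‖ₑ ∂π := enorm_integral_le_lintegral_enorm _
      _ = eLpNorm' (fun y => V x - V (x - y)) 1 π := by simp [eLpNorm'_eq_lintegral_enorm]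
      _ ≤ eLpNorm' (fun y => V x - V (x - y)) p.toReal π :=
          eLpNorm'_le_eLpNorm'_of_exponent_le one_pos hq π (measurable_const.sub
            (hV.comp (measurable_const.sub measurable_id))).aestronglyMeasurable
  have hmeas : Measurable fun z : G × G => ‖V z.1 - V (z.1 - z.2)‖ₑ ^ p.toReal :=
    ((hV.comp measurable_fst).sub (hV.comp (measurable_fst.sub measurable_snd))).enorm.pow_const _
  refine (ENNReal.rpow_le_rpow_iff hq0).mp ?_
  calc eLpNorm' (fun x => V x - ∫ y, V (x - y) ∂π) p.toReal ν ^ p.toReal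
      = ∫⁻ x, ‖V x - ∫ y, V (x - y) ∂π‖ₑ ^ p.toReal ∂ν :=
        (lintegral_rpow_enorm_eq_rpow_eLpNorm' hq0).symm
    _ ≤ ∫⁻ x, eLpNorm' (fun y => V x - V (x - y)) p.toReal π ^ p.toReal ∂ν := by
        gcongr with x
        exact hpoint x
    _ = ∫⁻ x, ∫⁻ y, ‖V x - V (x - y)‖ₑ ^ p.toReal ∂π ∂ν := by
        simp_rw [lintegral_rpow_enorm_eq_rpow_eLpNorm' hq0]
    _ = ∫⁻ y, ∫⁻ x, ‖V (x - y) - V x‖ₑ ^ p.toReal ∂ν ∂π := by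
        rw [lintegral_lintegral_swap hmeas.aemeasurable]
        simp_rw [enorm_sub_rev]
    _ = ∫⁻ y, eLpNorm' (fun x => V (x - y) - V x) p.toReal ν ^ p.toReal ∂π := by
        simp_rw [lintegral_rpow_enorm_eq_rpow_eLpNorm' hq0]
    _ ≤ ∫⁻ _, A ^ p.toReal ∂π := lintegral_mono_ae (hA.mono fun y hy => by gcongr)
    _ = A ^ p.toReal := by simp

theorem setLIntegral_ball_enorm_comp_sub_left {E : Type*} [NormedAddCommGroup E]
    [MeasurableSpace E] [BorelSpace E] (μ : Measure E) [μ.IsNegInvariant] [μ.IsAddLeftInvariant]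
    (f : E → ℝ≥0∞) (x : E) (r : ℝ) :
    ∫⁻ y in ball 0 r, f (x - y) ∂μ = ∫⁻ z in ball x r, f z ∂μ := by
  have hpre : (fun y => x - y) ⁻¹' ball x r = ball 0 r := by
    ext y
    simp [dist_eq_norm]
  rw [← hpre]
  exact (Measure.measurePreserving_sub_left μ x).setLIntegral_comp_preimage_emb
    (MeasurableEquiv.subLeft x).measurableEmbedding f _

section LocUnif

variable {N : ℕ}

theorem eLpNorm_restrict_ball_le_locUnifNorm (p : ℝ) (V : EuclideanSpace ℝ (Fin N) → ℝ)
    (x : EuclideanSpace ℝ (Fin N)) :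
    eLpNorm V (ENNReal.ofReal p) (volume.restrict (ball x 1)) ≤ locUnifNorm p V :=
  le_iSup (fun x₀ => eLpNorm V (ENNReal.ofReal p) (volume.restrict (ball x₀ 1))) x

theorem setLIntegral_ball_enorm_le_locUnifNorm {p : ℝ} (hp : 1 ≤ p)
    {V : EuclideanSpace ℝ (Fin N) → ℝ} (hV : AEStronglyMeasurable V)
    (x : EuclideanSpace ℝ (Fin N)) {δ : ℝ} (hδ : δ ≤ 1) :
    ∫⁻ z in ball x δ, ‖V z‖ₑ ≤
      locUnifNorm p V * volume (ball (0 : EuclideanSpace ℝ (Fin N)) 1) ^ (1 - 1 / p) := by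
  have hp1 : (1 : ℝ≥0∞) ≤ ENNReal.ofReal p := by simpa using ENNReal.ofReal_le_ofReal hp
  calc ∫⁻ z in ball x δ, ‖V z‖ₑ ≤ ∫⁻ z in ball x 1, ‖V z‖ₑ :=
        lintegral_mono_set (ball_subset_ball hδ)
    _ = eLpNorm V 1 (volume.restrict (ball x 1)) := eLpNorm_one_eq_lintegral_enorm.symm
    _ ≤ eLpNorm V (ENNReal.ofReal p) (volume.restrict (ball x 1)) *
          volume.restrict (ball x 1) Set.univ ^
            (1 / (1 : ℝ≥0∞).toReal - 1 / (ENNReal.ofReal p).toReal) :=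
        eLpNorm_le_eLpNorm_mul_rpow_measure_univ hp1 hV.restrict
    _ ≤ locUnifNorm p V * volume (ball (0 : EuclideanSpace ℝ (Fin N)) 1) ^ (1 - 1 / p) := by
        rw [Measure.restrict_apply_univ, Measure.addHaar_ball_center, ENNReal.toReal_one,
          ENNReal.toReal_ofReal (by linarith), one_div_one]
        gcongr
        exact eLpNorm_restrict_ball_le_locUnifNorm p V x

theorem exists_lintegral_enorm_comp_sub_cond_ball_le {p : ℝ} (hp : 1 ≤ p)
    {V : EuclideanSpace ℝ (Fin N) → ℝ} (hV : AEStronglyMeasurable V)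
    (hVU : locUnifNorm p V < ⊤) {δ : ℝ} (hδ : 0 < δ) (hδ1 : δ ≤ 1) :
    ∃ C ≠ ∞, ∀ x,
      ∫⁻ y, ‖V (x - y)‖ₑ ∂volume[|ball (0 : EuclideanSpace ℝ (Fin N)) δ] ≤ C := by
  have hexp : 0 ≤ 1 - 1 / p := sub_nonneg.mpr ((div_le_one (by linarith)).mpr hp)
  refine ⟨(volume (ball (0 : EuclideanSpace ℝ (Fin N)) δ))⁻¹ *
      (locUnifNorm p V * volume (ball (0 : EuclideanSpace ℝ (Fin N)) 1) ^ (1 - 1 / p)),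
    mul_ne_top (inv_ne_top.mpr (measure_ball_pos volume 0 hδ).ne')
      (mul_ne_top hVU.ne (rpow_ne_top_of_nonneg hexp measure_ball_lt_top.ne)), fun x => ?_⟩
  rw [ProbabilityTheory.cond, lintegral_smul_measure, smul_eq_mul,
    setLIntegral_ball_enorm_comp_sub_left volume (fun z => ‖V z‖ₑ)]
  exact mul_le_mul_right (setLIntegral_ball_enorm_le_locUnifNorm hp hV x hδ1) _

end LocUnif

theorem stmt2_general {N : ℕ} {p₀ : ℝ} (hp : 1 ≤ p₀)
    (V : EuclideanSpace ℝ (Fin N) → ℝ) (hV : Measurable V)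
    (hVU : locUnifNorm p₀ V < ⊤)
    (hTrans : Tendsto (fun y : EuclideanSpace ℝ (Fin N) =>
        locUnifNorm p₀ (fun x => V (x - y) - V x)) (nhds 0) (nhds 0)) :
    ApproxByBounded p₀ V := by
  intro ε hε
  obtain ⟨δ, hδ, hδ1, hsmall⟩ : ∃ δ > 0, δ ≤ 1 ∧
      ∀ y ∈ ball (0 : EuclideanSpace ℝ (Fin N)) δ,
        locUnifNorm p₀ (fun x => V (x - y) - V x) ≤ ENNReal.ofReal (ε / 2) := by
    obtain ⟨δ, hδ, h⟩ := Metric.eventually_nhds_iff_ball.mp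
      (hTrans.eventually (eventually_le_nhds (ENNReal.ofReal_pos.mpr (half_pos hε))))
    exact ⟨min δ 1, lt_min hδ one_pos, min_le_right _ _,
      fun y hy => h y (ball_subset_ball (min_le_left _ _) hy)⟩
  set π := volume[|ball (0 : EuclideanSpace ℝ (Fin N)) δ]
  have : IsProbabilityMeasure π := cond_isProbabilityMeasure_of_finite
    (measure_ball_pos volume 0 hδ).ne' measure_ball_lt_top.ne
  obtain ⟨C, hC, hbound⟩ :=
    exists_lintegral_enorm_comp_sub_cond_ball_le hp hV.aestronglyMeasurable hVU hδ hδ1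
  have hint : ∀ x, Integrable (fun y => V (x - y)) π := fun x =>
    ⟨(hV.comp (measurable_const.sub measurable_id)).aestronglyMeasurable,
      (hbound x).trans_lt hC.lt_top⟩
  have hW : Measurable fun x => ∫ y, V (x - y) ∂π :=
    (hV.comp (measurable_fst.sub measurable_snd)).stronglyMeasurable.integral_prod_right'.measurable
  refine ⟨fun x => ∫ y, V (x - y) ∂π, hW, ⟨C.toReal, ae_of_all _ fun x => ?_⟩, ?_⟩
  · simpa using norm_integral_le_toReal_of_lintegral_enorm_le hC (hbound x)
  calc locUnifNorm p₀ (V - fun x => ∫ y, V (x - y) ∂π) ≤ ENNReal.ofReal (ε / 2) :=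
        iSup_le fun x₀ => eLpNorm_sub_integral_translate_le (by simpa using ofReal_le_ofReal hp)
          ofReal_ne_top hV hint ((ae_cond_mem measurableSet_ball).mono fun y hy =>
            (eLpNorm_restrict_ball_le_locUnifNorm _ _ x₀).trans (hsmall y hy))
    _ < ENNReal.ofReal ε := (ofReal_lt_ofReal_iff hε).mpr (half_lt_self hε)

theorem stmt2 {N : ℕ} (hN : 1 ≤ N) {p₀ : ℝ} (hp : 1 ≤ p₀)
    (V : EuclideanSpace ℝ (Fin N) → ℝ) (hV : Measurable V)
    (hVU : locUnifNorm p₀ V < ⊤)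
    (hTrans : Tendsto (fun y : EuclideanSpace ℝ (Fin N) =>
        locUnifNorm p₀ (fun x => V (x - y) - V x)) (nhds 0) (nhds 0)) :
    ApproxByBounded p₀ V :=
  stmt2_general hp V hV hVU hTrans
end

section
/- Let N ≥ 1, 1 ≤ p₀ < ∞, and let V ∈ L^{p₀}_U(ℝ^N). Assume V is not too large at infinity in the sense that there exists M₀ > 0 such that lim_{|x|→∞} ∫_{B(x,1)} |V(y) − V_{M₀}(y)|^{p₀} dy = 0. Then ‖V − V_M‖_{L^{p₀}_U(ℝ^N)} → 0 as M → ∞. -/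
/-!
Since `|V - V_M| = (|V| - M)⁺` decreases in `M`, a ball far from the origin carries, for every
`M ≥ M₀`, at most the integral of `|V - V_{M₀}|^p`, which is small by hypothesis. The remaining
balls lie in a compact set, covered by finitely many unit balls, so `|V|^p` is integrable there
and dominated convergence makes the integral of `|V - V_M|^p` over it small for large `M`.
-/

open MeasureTheory Metric Filter ENNReal

/-- Truncation at level `M`. -/
noncomputable def trunc {α : Type*} (M : ℝ) (V : α → ℝ) : α → ℝ :=
  fun x => max (-M) (min (V x) M)

section Trunc

variable {α : Type*} {M M' : ℝ} {V : α → ℝ}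

lemma abs_sub_trunc (hM : 0 ≤ M) (V : α → ℝ) (x : α) :
    |V x - trunc M V x| = max (|V x| - M) 0 := by
  simp only [trunc]
  grind [abs_of_nonneg, abs_of_nonpos]

lemma abs_sub_trunc_le_of_le (hM' : 0 ≤ M') (h : M' ≤ M) (x : α) :
    |V x - trunc M V x| ≤ |V x - trunc M' V x| := by
  rw [abs_sub_trunc (hM'.trans h), abs_sub_trunc hM']
  exact max_le_max (by linarith) le_rfl

lemma abs_sub_trunc_le_abs (hM : 0 ≤ M) (x : α) : |V x - trunc M V x| ≤ |V x| := by
  rw [abs_sub_trunc hM]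
  exact max_le (by linarith) (abs_nonneg _)

lemma sub_trunc_eq_zero_of_abs_le {x : α} (h : |V x| ≤ M) : V x - trunc M V x = 0 := by
  rw [← abs_eq_zero, abs_sub_trunc ((abs_nonneg _).trans h), max_eq_right (by linarith)]

lemma Measurable.trunc [MeasurableSpace α] (hV : Measurable V) (M : ℝ) :
    Measurable (trunc M V) :=
  measurable_const.max (hV.min measurable_const)

lemma tendsto_lintegral_sub_trunc [MeasurableSpace α] {μ : Measure α} {p : ℝ} (hp : 0 < p)
    (hV : Measurable V) (hfin : ∫⁻ y, ENNReal.ofReal (|V y| ^ p) ∂μ ≠ ⊤) :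
    Tendsto (fun M => ∫⁻ y, ENNReal.ofReal (|V y - trunc M V y| ^ p) ∂μ) atTop (nhds 0) := by
  have hmeas : ∀ M, Measurable fun y => ENNReal.ofReal (|V y - trunc M V y| ^ p) := fun M =>
    ((Real.continuous_rpow_const hp.le).measurable.comp (hV.sub (hV.trunc M)).abs).ennreal_ofReal
  have hbound : ∀ᶠ M in atTop, ∀ᵐ y ∂μ,
      ENNReal.ofReal (|V y - trunc M V y| ^ p) ≤ ENNReal.ofReal (|V y| ^ p) := by
    filter_upwards [eventually_ge_atTop 0] with M hM
    exact ae_of_all _ fun y => ENNReal.ofReal_le_ofReal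
      (Real.rpow_le_rpow (abs_nonneg _) (abs_sub_trunc_le_abs hM y) hp.le)
  have hlim : ∀ᵐ y ∂μ, Tendsto (fun M => ENNReal.ofReal (|V y - trunc M V y| ^ p)) atTop
      (nhds 0) := by
    refine ae_of_all _ fun y => tendsto_const_nhds.congr' ?_
    filter_upwards [eventually_ge_atTop |V y|] with M hM
    rw [sub_trunc_eq_zero_of_abs_le hM, abs_zero, Real.zero_rpow hp.ne', ENNReal.ofReal_zero]
  simpa using tendsto_lintegral_filter_of_dominated_convergence _
    (Eventually.of_forall hmeas) hbound hfin hlim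

end Trunc

lemma IsCompact.setLIntegral_ne_top {X : Type*} [TopologicalSpace X] [MeasurableSpace X]
    {μ : Measure X} {f : X → ℝ≥0∞} (hloc : ∀ x, ∃ t ∈ nhds x, ∫⁻ y in t, f y ∂μ ≠ ⊤)
    {K : Set X} (hK : IsCompact K) : ∫⁻ y in K, f y ∂μ ≠ ⊤ := by
  refine hK.induction_on (by simp) (fun s t hst ht => ne_top_of_le_ne_top ht
    (lintegral_mono_set hst)) (fun s t hs ht => ne_top_of_le_ne_top
    (ENNReal.add_ne_top.2 ⟨hs, ht⟩) (lintegral_union_le f s t)) fun x _ => ?_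
  obtain ⟨t, ht, hfin⟩ := hloc x
  exact ⟨t, mem_nhdsWithin_of_mem_nhds ht, hfin⟩

theorem tendsto_iSup_setLIntegral_sub_trunc {X : Type*} [MetricSpace X] [ProperSpace X]
    [MeasurableSpace X] {μ : Measure X} {p r : ℝ} (hp : 0 < p) (hr : 0 < r) {V : X → ℝ}
    (hV : Measurable V) (hloc : ∀ x, ∫⁻ y in ball x r, ENNReal.ofReal (|V y| ^ p) ∂μ ≠ ⊤)
    {M₀ : ℝ} (hM₀ : 0 ≤ M₀)
    (hInfty : Tendsto (fun x => ∫⁻ y in ball x r, ENNReal.ofReal (|V y - trunc M₀ V y| ^ p) ∂μ)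
      (cocompact X) (nhds 0)) :
    Tendsto (fun M => ⨆ x, ∫⁻ y in ball x r, ENNReal.ofReal (|V y - trunc M V y| ^ p) ∂μ)
      atTop (nhds 0) := by
  rw [ENNReal.tendsto_nhds_zero] at hInfty ⊢
  intro ε hε
  obtain ⟨K, hK, hKε⟩ := mem_cocompact.1 (hInfty ε hε)
  have hfin : ∫⁻ y in cthickening r K, ENNReal.ofReal (|V y| ^ p) ∂μ ≠ ⊤ :=
    hK.cthickening.setLIntegral_ne_top fun x => ⟨ball x r, ball_mem_nhds x hr, hloc x⟩
  have hnear := ENNReal.tendsto_nhds_zero.1 (tendsto_lintegral_sub_trunc hp hV hfin) ε hε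
  filter_upwards [hnear, eventually_ge_atTop M₀] with M hMK hMM₀
  refine iSup_le fun x => ?_
  by_cases hx : x ∈ K
  · exact (lintegral_mono_set ((ball_subset_thickening hx r).trans
      (thickening_subset_cthickening r K))).trans hMK
  · refine le_trans (lintegral_mono fun y => ?_) (hKε hx)
    exact ENNReal.ofReal_le_ofReal
      (Real.rpow_le_rpow (abs_nonneg _) (abs_sub_trunc_le_of_le hM₀ hMM₀ y) hp.le)

lemma eLpNorm_ofReal_eq_lintegral {α : Type*} [MeasurableSpace α] {μ : Measure α} {p : ℝ}
    (hp : 0 < p) (f : α → ℝ) :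
    eLpNorm f (ENNReal.ofReal p) μ = (∫⁻ y, ENNReal.ofReal (|f y| ^ p) ∂μ) ^ (1 / p) := by
  rw [eLpNorm_eq_lintegral_rpow_enorm_toReal (by simpa using hp) ofReal_ne_top,
    ENNReal.toReal_ofReal hp.le]
  congr 1
  refine lintegral_congr fun y => ?_
  rw [Real.enorm_eq_ofReal_abs, ← ENNReal.ofReal_rpow_of_nonneg (abs_nonneg _) hp.le]

lemma locUnifNorm_eq {N : ℕ} {p : ℝ} (hp : 0 < p) (V : EuclideanSpace ℝ (Fin N) → ℝ) :
    locUnifNorm p V = (⨆ x, ∫⁻ y in ball x 1, ENNReal.ofReal (|V y| ^ p)) ^ (1 / p) := by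
  simp only [locUnifNorm, eLpNorm_ofReal_eq_lintegral hp]
  exact ((ENNReal.orderIsoRpow (1 / p) (one_div_pos.2 hp)).map_iSup _).symm

theorem stmt3_general {N : ℕ} {p₀ : ℝ} (hp : 1 ≤ p₀)
    (V : EuclideanSpace ℝ (Fin N) → ℝ) (hV : Measurable V)
    (hVU : locUnifNorm p₀ V < ⊤)
    (hInfty : ∃ M₀ : ℝ, 0 < M₀ ∧
      Tendsto (fun x : EuclideanSpace ℝ (Fin N) =>
          ∫⁻ y in ball x 1, ENNReal.ofReal (|V y - trunc M₀ V y| ^ p₀))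
        (cocompact (EuclideanSpace ℝ (Fin N))) (nhds 0)) :
    Tendsto (fun M : ℝ => locUnifNorm p₀ (V - trunc M V)) atTop (nhds 0) := by
  obtain ⟨M₀, hM₀, hInfty⟩ := hInfty
  have hp0 : 0 < p₀ := one_pos.trans_le hp
  have hloc : ∀ x, ∫⁻ y in ball x 1, ENNReal.ofReal (|V y| ^ p₀) ≠ ⊤ := by
    rw [locUnifNorm_eq hp0, ENNReal.rpow_lt_top_iff_of_pos (one_div_pos.2 hp0),
      iSup_lt_iff] at hVU
    obtain ⟨b, hb, hle⟩ := hVU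
    exact fun x => ((hle x).trans_lt hb).ne
  have h := tendsto_iSup_setLIntegral_sub_trunc hp0 one_pos hV hloc hM₀.le hInfty
  have hcont := (ENNReal.continuous_rpow_const (y := 1 / p₀)).tendsto 0
  rw [ENNReal.zero_rpow_of_pos (one_div_pos.2 hp0)] at hcont
  simp only [locUnifNorm_eq hp0]
  exact hcont.comp h

theorem stmt3 {N : ℕ} (hN : 1 ≤ N) {p₀ : ℝ} (hp : 1 ≤ p₀)
    (V : EuclideanSpace ℝ (Fin N) → ℝ) (hV : Measurable V)
    (hVU : locUnifNorm p₀ V < ⊤)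
    (hInfty : ∃ M₀ : ℝ, 0 < M₀ ∧
      Tendsto (fun x : EuclideanSpace ℝ (Fin N) =>
          ∫⁻ y in ball x 1, ENNReal.ofReal (|V y - trunc M₀ V y| ^ p₀))
        (cocompact (EuclideanSpace ℝ (Fin N))) (nhds 0)) :
    Tendsto (fun M : ℝ => locUnifNorm p₀ (V - trunc M V)) atTop (nhds 0) :=
  stmt3_general hp V hV hVU hInfty
end

section
/- Let N ≥ 1 and 1 ≤ p₀ < ∞. There exist a measurable function V : ℝ^N → [0,∞) with ‖V‖_{L^{p₀}_U(ℝ^N)} < ∞ and a constant c > 0 such that ‖V − W‖_{L^{p₀}_U(ℝ^N)} ≥ c for every essentially bounded measurable W : ℝ^N → ℝ. In particular, the set of functions in L^{p₀}_U(ℝ^N) that can be approximated in L^{p₀}_U(ℝ^N) by bounded functions is a proper subset of L^{p₀}_U(ℝ^N). (A witness is V = Σ_n n^{N/p₀} 𝟙_{B(x_n, 1/n)} for any sequence x_n with |x_n| → ∞ and |x_n − x_m| > 2 for n ≠ m.) -/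
/-!
Take spikes `V = ∑ₙ (n + 1) 𝟙_{B(cₙ, rₙ)}` with centres `cₙ = 4n e` for a unit vector `e` and
radii with `(n + 1)^p rₙ^d = 1` (`d` the dimension), so every spike has the same `L^p` norm
`K = |B(0,1)|^{1/p}`. The centres are so far apart that a unit ball meets at most one spike,
hence `‖V‖_{L^p_U} ≤ K`. If `|W| ≤ C` almost everywhere, then on the spike of height
`n + 1 ≥ 2C` we have `|V - W| ≥ (n + 1)/2`, so `‖V - W‖_{L^p(B(cₙ,1))} ≥ K/2`.
-/

open MeasureTheory Metric Filter ENNReal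

theorem measurable_tsum_of_summable {α F : Type*} [MeasurableSpace α] [NormedAddCommGroup F]
    [MeasurableSpace F] [BorelSpace F] [SecondCountableTopology F] {f : ℕ → α → F}
    (hf : ∀ n, Measurable (f n)) (hs : ∀ x, Summable fun n => f n x) :
    Measurable fun x => ∑' n, f n x :=
  measurable_of_tendsto_metrizable (fun n => Finset.measurable_sum _ fun i _ => hf i)
    (tendsto_pi_nhds.2 fun x => by simpa using (hs x).hasSum.tendsto_sum_nat)

theorem eLpNorm_indicator_le_two_mul_eLpNorm_sub {α : Type*} [MeasurableSpace α]
    {μ : Measure α} {s : Set α} {V W : α → ℝ} {b C : ℝ} (hCb : 2 * C ≤ b)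
    (hV : ∀ x ∈ s, b ≤ V x) (hW : ∀ᵐ x ∂μ, |W x| ≤ C) (p : ℝ≥0∞) :
    eLpNorm (s.indicator fun _ => b) p μ ≤ 2 * eLpNorm (V - W) p μ := by
  refine eLpNorm_le_nnreal_smul_eLpNorm_of_ae_le_mul (hW.mono fun x hx => ?_) p
  rw [← NNReal.coe_le_coe, NNReal.coe_mul, coe_nnnorm, coe_nnnorm, Real.norm_eq_abs,
    Real.norm_eq_abs, Pi.sub_apply]
  by_cases hxs : x ∈ s
  · rw [Set.indicator_of_mem hxs]
    have hVx := hV x hxs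
    have hWx := (abs_le.1 hx).2
    rw [abs_of_nonneg (by linarith [abs_nonneg (W x)])]
    push_cast
    linarith [le_abs_self (V x - W x)]
  · rw [Set.indicator_of_notMem hxs, abs_zero]; positivity

section SpikeSum

variable {E : Type*} [PseudoMetricSpace E] (c : ℕ → E) (r h : ℕ → ℝ)

noncomputable def spikeSum (x : E) : ℝ := ∑' n, (ball (c n) (r n)).indicator (fun _ => h n) x

variable {c r}

theorem eq_of_mem_ball_of_mem_ball (hsep : Pairwise fun m n => 4 ≤ dist (c m) (c n))
    (hr : ∀ n, r n ≤ 1) {x₀ x y : E} {m n : ℕ} (hx : x ∈ ball x₀ 1) (hy : y ∈ ball x₀ 1)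
    (hxm : x ∈ ball (c m) (r m)) (hyn : y ∈ ball (c n) (r n)) : m = n := by
  by_contra hmn
  rw [mem_ball] at hx hy hxm hyn
  have := dist_triangle4 (c m) x x₀ (c n)
  have := dist_triangle x₀ y (c n)
  linarith [hsep hmn, hr m, hr n, dist_comm x (c m), dist_comm x₀ y]

theorem exists_forall_ne_notMem_ball (hsep : Pairwise fun m n => 4 ≤ dist (c m) (c n))
    (hr : ∀ n, r n ≤ 1) (x₀ : E) :
    ∃ m, ∀ x ∈ ball x₀ 1, ∀ n ≠ m, x ∉ ball (c n) (r n) := by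
  by_cases hmeet : ∃ m, ∃ y ∈ ball x₀ 1, y ∈ ball (c m) (r m)
  · obtain ⟨m, y, hy, hym⟩ := hmeet
    exact ⟨m, fun x hx n hnm hxn => hnm (eq_of_mem_ball_of_mem_ball hsep hr hx hy hxn hym)⟩
  · push Not at hmeet
    exact ⟨0, fun x hx n _ => hmeet n x hx⟩

theorem spikeSum_eq_indicator {m : ℕ} {x : E} (hx : ∀ n ≠ m, x ∉ ball (c n) (r n)) :
    spikeSum c r h x = (ball (c m) (r m)).indicator (fun _ => h m) x :=
  tsum_eq_single m fun n hn => Set.indicator_of_notMem (hx n hn) _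

theorem spikeSum_nonneg (hh : ∀ n, 0 ≤ h n) (x : E) : 0 ≤ spikeSum c r h x :=
  tsum_nonneg fun n => Set.indicator_nonneg (fun _ _ => hh n) x

theorem spikeSum_of_mem (hsep : Pairwise fun m n => 4 ≤ dist (c m) (c n))
    (hr : ∀ n, r n ≤ 1) {m : ℕ} {x : E}
    (hx : x ∈ ball (c m) (r m)) : spikeSum c r h x = h m := by
  rw [spikeSum_eq_indicator h fun n hn hxn => hn (eq_of_mem_ball_of_mem_ball hsep hr
    (mem_ball_self one_pos) (mem_ball_self one_pos) hxn hx), Set.indicator_of_mem hx]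

theorem summable_spikeSum (hsep : Pairwise fun m n => 4 ≤ dist (c m) (c n))
    (hr : ∀ n, r n ≤ 1) (x : E) :
    Summable fun n => (ball (c n) (r n)).indicator (fun _ => h n) x := by
  obtain ⟨m, hm⟩ := exists_forall_ne_notMem_ball hsep hr x
  refine summable_of_ne_finset_zero (s := {m}) fun n hn => Set.indicator_of_notMem ?_ _
  exact hm x (mem_ball_self one_pos) n (Finset.notMem_singleton.1 hn)

theorem measurable_spikeSum [MeasurableSpace E] [OpensMeasurableSpace E]
    (hsep : Pairwise fun m n => 4 ≤ dist (c m) (c n))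
    (hr : ∀ n, r n ≤ 1) :
    Measurable (spikeSum c r h) :=
  measurable_tsum_of_summable (fun _ => measurable_const.indicator measurableSet_ball)
    (summable_spikeSum h hsep hr)

theorem eLpNorm_spikeSum_restrict_ball_le [MeasurableSpace E] [OpensMeasurableSpace E]
    (hsep : Pairwise fun m n => 4 ≤ dist (c m) (c n))
    (hr : ∀ n, r n ≤ 1) {μ : Measure E} {p K : ℝ≥0∞}
    (hK : ∀ n, eLpNorm ((ball (c n) (r n)).indicator fun _ => h n) p μ ≤ K) (x₀ : E) :
    eLpNorm (spikeSum c r h) p (μ.restrict (ball x₀ 1)) ≤ K := by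
  obtain ⟨m, hm⟩ := exists_forall_ne_notMem_ball hsep hr x₀
  have hEq : spikeSum c r h =ᵐ[μ.restrict (ball x₀ 1)]
      (ball (c m) (r m)).indicator fun _ => h m :=
    (ae_restrict_iff' measurableSet_ball).2 <| ae_of_all _ fun x hx =>
      spikeSum_eq_indicator h (hm x hx)
  rw [eLpNorm_congr_ae hEq]
  exact (eLpNorm_mono_measure _ Measure.restrict_le_self).trans (hK m)

end SpikeSum

noncomputable def spikeRadius (p : ℝ) (d n : ℕ) : ℝ := ((n : ℝ) + 1) ^ (-p / d)

theorem spikeRadius_nonneg (p : ℝ) (d n : ℕ) : 0 ≤ spikeRadius p d n :=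
  Real.rpow_nonneg (by positivity) _

theorem spikeRadius_le_one {p : ℝ} (hp : 0 ≤ p) (d n : ℕ) : spikeRadius p d n ≤ 1 :=
  Real.rpow_le_one_of_one_le_of_nonpos (by simp) (div_nonpos_of_nonpos_of_nonneg (by linarith)
    (by positivity))

theorem rpow_mul_spikeRadius_pow {p : ℝ} {d : ℕ} (hd : d ≠ 0) (n : ℕ) :
    ((n : ℝ) + 1) ^ p * spikeRadius p d n ^ d = 1 := by
  rw [spikeRadius, ← Real.rpow_natCast, ← Real.rpow_mul (by positivity),
    div_mul_cancel₀ _ (Nat.cast_ne_zero.2 hd), Real.rpow_neg (by positivity),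
    mul_inv_cancel₀ (by positivity)]

theorem pairwise_le_dist_smul {E : Type*} [NormedAddCommGroup E] [NormedSpace ℝ E] {e : E}
    (he : ‖e‖ = 1) (a : ℝ) (ha : 0 ≤ a) :
    Pairwise fun m n : ℕ => a ≤ dist ((a * m) • e) ((a * n) • e) := by
  intro m n hmn
  rw [dist_eq_norm, ← sub_smul, norm_smul, he, mul_one, ← mul_sub, norm_mul,
    Real.norm_of_nonneg ha]
  have hone : (1 : ℝ) ≤ ‖(m : ℝ) - n‖ := by
    rw [Real.norm_eq_abs, ← Int.cast_natCast, ← Int.cast_natCast (R := ℝ) n, ← Int.cast_sub,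
      ← Int.cast_abs, ← Int.cast_one, Int.cast_le]
    exact Int.one_le_abs (sub_ne_zero.2 (by exact_mod_cast hmn))
  nlinarith

section AddHaar

open Module

variable {E : Type*} [NormedAddCommGroup E] [NormedSpace ℝ E] [MeasurableSpace E] [BorelSpace E]
  [FiniteDimensional ℝ E] [Nontrivial E] (μ : Measure E) [μ.IsAddHaarMeasure] {p : ℝ}

theorem eLpNorm_indicator_ball_const (hp : 0 < p) (x : E) {b ρ : ℝ} (hb : 0 ≤ b) (hρ : 0 ≤ ρ)
    (hbρ : b ^ p * ρ ^ finrank ℝ E = 1) :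
    eLpNorm ((ball x ρ).indicator fun _ => b) (ENNReal.ofReal p) μ = μ (ball 0 1) ^ (1 / p) := by
  have hbρ' : b * (ρ ^ finrank ℝ E) ^ (1 / p) = 1 := by
    rw [← Real.rpow_rpow_inv hb hp.ne', one_div, ← Real.mul_rpow (by positivity) (by positivity),
      hbρ, Real.one_rpow]
  rw [eLpNorm_indicator_const measurableSet_ball (by simpa using hp) ofReal_ne_top,
    toReal_ofReal hp.le, Measure.addHaar_ball μ x hρ,
    ENNReal.mul_rpow_of_nonneg _ _ (by positivity), ← mul_assoc, Real.enorm_of_nonneg hb,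
    ofReal_rpow_of_nonneg (by positivity) (by positivity),
    ← ENNReal.ofReal_mul hb, hbρ', ENNReal.ofReal_one, one_mul]

theorem exists_nonneg_not_approx_by_bounded (hp : 0 < p) :
    ∃ V : E → ℝ, Measurable V ∧ (∀ x, 0 ≤ V x) ∧
      (∀ x₀, eLpNorm V (ENNReal.ofReal p) (μ.restrict (ball x₀ 1)) ≤ μ (ball 0 1) ^ (1 / p)) ∧
      ∀ W : E → ℝ, (∃ C : ℝ, ∀ᵐ y ∂μ, |W y| ≤ C) →
        ∃ x₀, μ (ball 0 1) ^ (1 / p) ≤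
          2 * eLpNorm (V - W) (ENNReal.ofReal p) (μ.restrict (ball x₀ 1)) := by
  obtain ⟨e, he⟩ := exists_norm_eq E zero_le_one
  set c : ℕ → E := fun n => ((4 : ℝ) * n) • e
  set r := spikeRadius p (finrank ℝ E)
  set h : ℕ → ℝ := fun n => n + 1
  have hsep := pairwise_le_dist_smul he 4 (by norm_num)
  have hr := spikeRadius_le_one hp.le (finrank ℝ E)
  have hK (n : ℕ) : eLpNorm ((ball (c n) (r n)).indicator fun _ => h n) (ENNReal.ofReal p) μ =
      μ (ball 0 1) ^ (1 / p) :=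
    eLpNorm_indicator_ball_const μ hp _ (by positivity) (spikeRadius_nonneg _ _ _)
      (rpow_mul_spikeRadius_pow finrank_pos.ne' n)
  refine ⟨spikeSum c r h, measurable_spikeSum h hsep hr,
    spikeSum_nonneg h fun n => by positivity,
    eLpNorm_spikeSum_restrict_ball_le h hsep hr fun n => (hK n).le, ?_⟩
  rintro W ⟨C, hW⟩
  set n := ⌈2 * C⌉₊
  refine ⟨c n, ?_⟩
  have hsub : ((ball (c n) (r n)).indicator fun _ => h n).support ⊆ ball (c n) 1 :=
    Set.support_indicator_subset.trans (ball_subset_ball (hr n))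
  rw [← hK n, ← eLpNorm_restrict_eq_of_support_subset hsub]
  refine eLpNorm_indicator_le_two_mul_eLpNorm_sub ?_ (fun x hx => ?_) (ae_restrict_of_ae hW) _
  · linarith [Nat.le_ceil (2 * C)]
  · exact (spikeSum_of_mem h hsep hr hx).ge

end AddHaar

theorem stmt4 {N : ℕ} (hN : 1 ≤ N) {p₀ : ℝ} (hp : 1 ≤ p₀) :
    ∃ V : EuclideanSpace ℝ (Fin N) → ℝ, Measurable V ∧ (∀ x, 0 ≤ V x) ∧
      locUnifNorm p₀ V < ⊤ ∧
      ∃ c : ℝ, 0 < c ∧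
        ∀ W : EuclideanSpace ℝ (Fin N) → ℝ, Measurable W →
          (∃ C : ℝ, ∀ᵐ y ∂(volume : Measure (EuclideanSpace ℝ (Fin N))), |W y| ≤ C) →
          ENNReal.ofReal c ≤ locUnifNorm p₀ (V - W) := by
  have : Nontrivial (EuclideanSpace ℝ (Fin N)) :=
    Module.nontrivial_of_finrank_pos (R := ℝ) (by rw [finrank_euclideanSpace_fin]; exact hN)
  obtain ⟨V, hV, hV0, hVle, hVW⟩ := exists_nonneg_not_approx_by_bounded
    (E := EuclideanSpace ℝ (Fin N)) volume (by linarith : 0 < p₀)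
  set K := (volume : Measure (EuclideanSpace ℝ (Fin N))) (ball 0 1) ^ (1 / p₀)
  have hK0 : K ≠ 0 := (ENNReal.rpow_pos (measure_ball_pos _ _ one_pos) measure_ball_lt_top.ne).ne'
  have hKtop : K ≠ ⊤ := ENNReal.rpow_ne_top_of_nonneg (by positivity) measure_ball_lt_top.ne
  refine ⟨V, hV, hV0, (iSup_le hVle).trans_lt (lt_top_iff_ne_top.2 hKtop), K.toReal / 2,
    half_pos (ENNReal.toReal_pos hK0 hKtop), fun W _ hW => ?_⟩
  obtain ⟨x₀, hx₀⟩ := hVW W hW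
  rw [ENNReal.ofReal_div_of_pos two_pos, ENNReal.ofReal_toReal hKtop, ENNReal.ofReal_ofNat]
  exact ENNReal.div_le_of_le_mul' (hx₀.trans (by gcongr; exact le_iSup_of_le x₀ le_rfl))
end

section
/- Let N ≥ 1 and 1 < p₀ < ∞. If V ∈ L^{p₀}_U(ℝ^N) can be approximated in L^1_U(ℝ^N) by bounded functions, then for every q with 1 < q < p₀, V can be approximated in L^q_U(ℝ^N) by bounded functions. -/
open MeasureTheory Metric Filter ENNReal

open Topology

/-! The proof truncates `V` at the level `C` bounding an `L¹_U`-approximant `W`.  Since the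
truncation is the pointwise nearest point of `[-C, C]`, the remainder `V - T_C V` is dominated
both by `|V - W|` and by `|V|`, so it is small in `L¹_U` and bounded in `L^{p₀}_U`.  Log-convexity
of `r ↦ ∫ |f|^r` (Hölder) on each unit ball then makes it small in `L^q_U` for `1 < q < p₀`. -/

lemma abs_sub_max_neg_min_le {v w C : ℝ} (hw : |w| ≤ C) :
    |v - max (-C) (min v C)| ≤ |v - w| := by
  rw [abs_le] at hw
  rcases le_total v C with hvC | hvC <;> rcases le_total (-C) v with hCv | hCv <;>
    simp only [min_eq_left, min_eq_right, max_eq_left, max_eq_right, hvC, hCv, hw.1.trans hw.2] <;>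
    rw [abs_le] <;> constructor <;> linarith [neg_abs_le (v - w), le_abs_self (v - w)]

lemma abs_max_neg_min_le {v C : ℝ} (hC : 0 ≤ C) : |max (-C) (min v C)| ≤ C :=
  abs_le.mpr ⟨le_max_left _ _, max_le (by linarith) (min_le_right _ _)⟩

lemma lintegral_rpow_le_lintegral_rpow_mul_lintegral_rpow {α : Type*} [MeasurableSpace α]
    {μ : Measure α} {g : α → ℝ≥0∞} (hg : AEMeasurable g μ) {a b r s : ℝ} (ha : 0 ≤ a)
    (hb : 0 ≤ b) (hab : a + b = 1) (hr : 0 ≤ r) (hs : 0 ≤ s) :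
    ∫⁻ x, g x ^ (a * r + b * s) ∂μ ≤ (∫⁻ x, g x ^ r ∂μ) ^ a * (∫⁻ x, g x ^ s ∂μ) ^ b := by
  have hsplit : ∀ x, g x ^ (a * r + b * s) = (g x ^ r) ^ a * (g x ^ s) ^ b := fun x => by
    rw [ENNReal.rpow_add_of_nonneg _ _ (by positivity) (by positivity), ← ENNReal.rpow_mul,
      ← ENNReal.rpow_mul, mul_comm a, mul_comm b]
  simp_rw [hsplit]
  exact ENNReal.lintegral_mul_norm_pow_le (hg.pow_const r) (hg.pow_const s) ha hb hab

section LocUnif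

variable {N : ℕ}

lemma locUnifNorm_mono_ae {p : ℝ} {f g : EuclideanSpace ℝ (Fin N) → ℝ}
    (h : ∀ᵐ y, ‖f y‖ ≤ ‖g y‖) : locUnifNorm p f ≤ locUnifNorm p g :=
  iSup_mono fun _ => eLpNorm_mono_ae (ae_restrict_of_ae h)

lemma locUnifNorm_rpow_le_iff {p : ℝ} (hp : 0 < p) {f : EuclideanSpace ℝ (Fin N) → ℝ}
    {c : ℝ≥0∞} :
    locUnifNorm p f ^ p ≤ c ↔ ∀ x₀, ∫⁻ y in ball x₀ 1, ‖f y‖ₑ ^ p ≤ c := by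
  rw [← ENNReal.le_rpow_inv_iff hp, locUnifNorm, iSup_le_iff]
  refine forall_congr' fun x₀ => ?_
  have h := eLpNorm_nnreal_pow_eq_lintegral (f := f) (μ := volume.restrict (ball x₀ 1))
    (Real.toNNReal_pos.mpr hp).ne'
  rw [Real.coe_toNNReal _ hp.le] at h
  rw [ENNReal.le_rpow_inv_iff hp, ENNReal.ofReal, h]

lemma locUnifNorm_rpow_le_interpolate {f : EuclideanSpace ℝ (Fin N) → ℝ} (hf : Measurable f)
    {a b p : ℝ} (ha : 0 ≤ a) (hb : 0 ≤ b) (hab : a + b = 1) (hp : 0 < p) :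
    locUnifNorm (a + b * p) f ^ (a + b * p) ≤
      locUnifNorm 1 f ^ a * (locUnifNorm p f ^ p) ^ b := by
  have hpos : 0 < a + b * p := by
    rcases ha.eq_or_lt with rfl | ha
    · rw [zero_add] at hab; simpa [hab] using hp
    · positivity
  rw [locUnifNorm_rpow_le_iff hpos]
  intro x₀
  have hball : ∀ {r : ℝ}, 0 < r → ∫⁻ y in ball x₀ 1, ‖f y‖ₑ ^ r ≤ locUnifNorm r f ^ r :=
    fun hr => (locUnifNorm_rpow_le_iff hr).mp le_rfl x₀
  calc ∫⁻ y in ball x₀ 1, ‖f y‖ₑ ^ (a + b * p)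
      = ∫⁻ y in ball x₀ 1, ‖f y‖ₑ ^ (a * 1 + b * p) := by rw [mul_one]
    _ ≤ (∫⁻ y in ball x₀ 1, ‖f y‖ₑ ^ (1 : ℝ)) ^ a * (∫⁻ y in ball x₀ 1, ‖f y‖ₑ ^ p) ^ b :=
        lintegral_rpow_le_lintegral_rpow_mul_lintegral_rpow hf.enorm.aemeasurable ha hb hab
          zero_le_one hp.le
    _ ≤ (locUnifNorm 1 f ^ (1 : ℝ)) ^ a * (locUnifNorm p f ^ p) ^ b := by
        gcongr
        exacts [hball one_pos, hball hp]
    _ = locUnifNorm 1 f ^ a * (locUnifNorm p f ^ p) ^ b := by rw [ENNReal.rpow_one]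

end LocUnif

lemma exists_pos_ofReal_rpow_mul_lt {a : ℝ} (ha : 0 < a) {K c : ℝ≥0∞} (hK : K ≠ ⊤)
    (hc : c ≠ 0) : ∃ δ : ℝ, 0 < δ ∧ ENNReal.ofReal δ ^ a * K < c := by
  have hcont : Continuous fun δ : ℝ => ENNReal.ofReal δ ^ a :=
    (ENNReal.continuous_rpow_const (y := a)).comp ENNReal.continuous_ofReal
  have hlim : Tendsto (fun δ : ℝ => ENNReal.ofReal δ ^ a * K) (𝓝[>] 0) (𝓝 0) := by
    simpa [ENNReal.zero_rpow_of_pos ha] using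
      (ENNReal.Tendsto.mul_const (hcont.tendsto 0) (Or.inr hK)).mono_left nhdsWithin_le_nhds
  obtain ⟨δ, hδc, hδ⟩ := ((hlim.eventually (gt_mem_nhds hc.bot_lt)).and self_mem_nhdsWithin).exists
  exact ⟨δ, hδ, hδc⟩

theorem stmt7_general {N : ℕ} {p₀ : ℝ}
    (V : EuclideanSpace ℝ (Fin N) → ℝ) (hV : Measurable V)
    (hVU : locUnifNorm p₀ V < ⊤)
    (happrox : ApproxByBounded 1 V) :
    ∀ q : ℝ, 1 < q → q < p₀ → ApproxByBounded q V := by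
  intro q hq1 hqp ε hε
  set a := (p₀ - q) / (p₀ - 1)
  set b := (q - 1) / (p₀ - 1)
  have ha : 0 < a := div_pos (by linarith) (by linarith)
  have hb : 0 ≤ b := div_nonneg (by linarith) (by linarith)
  have hne : p₀ - 1 ≠ 0 := by linarith
  have hp₀ : 0 ≤ p₀ := by linarith
  have hab : a + b = 1 := by simp only [a, b]; field_simp; ring
  have hq : a + b * p₀ = q := by simp only [a, b]; field_simp; ring
  obtain ⟨δ, hδ, hδε⟩ := exists_pos_ofReal_rpow_mul_lt ha (K := (locUnifNorm p₀ V ^ p₀) ^ b)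
    (rpow_ne_top_of_nonneg hb (rpow_ne_top_of_nonneg hp₀ hVU.ne)) (c := ENNReal.ofReal ε ^ q)
    (by simp [hε])
  obtain ⟨W, -, ⟨C, hWC⟩, hVW⟩ := happrox δ hδ
  set C' := max C 0
  have hC' : 0 ≤ C' := le_max_right C 0
  set T := fun y => max (-C') (min (V y) C')
  refine ⟨T, by fun_prop, ⟨C', ae_of_all _ fun y => abs_max_neg_min_le hC'⟩, ?_⟩
  have h1 : locUnifNorm 1 (V - T) ≤ ENNReal.ofReal δ :=
    (locUnifNorm_mono_ae (hWC.mono fun y hy => abs_sub_max_neg_min_le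
      (hy.trans (le_max_left C 0)))).trans hVW.le
  have hVT : locUnifNorm p₀ (V - T) ≤ locUnifNorm p₀ V :=
    locUnifNorm_mono_ae (ae_of_all _ fun y => by
      simpa using abs_sub_max_neg_min_le (v := V y) (w := 0) (by simpa using hC'))
  rw [← ENNReal.rpow_lt_rpow_iff (by linarith : 0 < q), ← hq]
  calc locUnifNorm (a + b * p₀) (V - T) ^ (a + b * p₀)
      ≤ locUnifNorm 1 (V - T) ^ a * (locUnifNorm p₀ (V - T) ^ p₀) ^ b :=
        locUnifNorm_rpow_le_interpolate (hV.sub (by fun_prop)) ha.le hb hab (by linarith)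
    _ ≤ ENNReal.ofReal δ ^ a * (locUnifNorm p₀ V ^ p₀) ^ b := by gcongr
    _ < ENNReal.ofReal ε ^ (a + b * p₀) := by rwa [hq]

theorem stmt7 {N : ℕ} (hN : 1 ≤ N) {p₀ : ℝ} (hp : 1 < p₀)
    (V : EuclideanSpace ℝ (Fin N) → ℝ) (hV : Measurable V)
    (hVU : locUnifNorm p₀ V < ⊤)
    (happrox : ApproxByBounded 1 V) :
    ∀ q : ℝ, 1 < q → q < p₀ → ApproxByBounded q V :=
  stmt7_general V hV hVU happrox
end

section
/- Let N ≥ 1 and let V : ℝ^N → [0,∞) be measurable with ‖V‖_{L^1_U(ℝ^N)} < ∞, and assume V can be approximated in L^1_U(ℝ^N) by bounded functions. Then the following are equivalent: (i) there exists M > 0 such that ∫_G V_M(x) dx = ∞ for every G ∈ 𝒢; (ii) ∫_G V(x) dx = ∞ for every G ∈ 𝒢. -/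
open MeasureTheory Metric Filter ENNReal

/-- The class `𝒢` of open sets containing arbitrarily large balls. -/
def InG {N : ℕ} (G : Set (EuclideanSpace ℝ (Fin N))) : Prop :=
  IsOpen G ∧ ∀ r : ℝ, 0 < r → ∃ x₀ : EuclideanSpace ℝ (Fin N), ball x₀ r ⊆ G

/-!
Since `V_M ≤ V`, (i) implies (ii). Conversely, if (i) fails, every level `M` has some `G ∈ 𝒢`
with `∫_G V_M < ∞`. Approximate `V` in `L¹_U` by `W` with `|W| ≤ M`, so that
`V ≤ V_M + |V - W|`: among many disjoint balls of radius `ρ` inside `G` one carries little of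
`∫_G V_M`, while `|V - W|` is uniformly small on every ball of radius `ρ`, as such a ball is
covered by boundedly many unit balls. So for every `ρ` and `ε` some ball of radius `ρ` has
`∫ V ≤ ε`; gluing balls of radii `m + 1` with `∫ V ≤ 2⁻ᵐ` gives a set in `𝒢` on which
`∫ V < ∞`, contradicting (ii).
-/

lemma trunc_le {α : Type*} {M : ℝ} {V : α → ℝ} {x : α} (h : -M ≤ V x) : trunc M V x ≤ V x :=
  max_le h (min_le_left _ _)

lemma ofReal_le_ofReal_trunc_add_enorm {α : Type*} {M : ℝ} {V W : α → ℝ} {x : α}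
    (hW : W x ≤ M) :
    ENNReal.ofReal (V x) ≤ ENNReal.ofReal (trunc M V x) + ‖V x - W x‖ₑ := by
  have hmin : V x ≤ min (V x) M + |V x - W x| := by
    rcases le_total (V x) M with h | h
    · simp [min_eq_left h]
    · rw [min_eq_right h]; linarith [le_abs_self (V x - W x)]
  have htrunc : min (V x) M ≤ trunc M V x := le_max_right _ _
  rw [Real.enorm_eq_ofReal_abs]
  exact (ENNReal.ofReal_le_ofReal (by linarith)).trans ENNReal.ofReal_add_le

lemma locUnifNorm_one_eq {N : ℕ} (V : EuclideanSpace ℝ (Fin N) → ℝ) :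
    locUnifNorm 1 V = ⨆ z, ∫⁻ x in ball z 1, ‖V x‖ₑ := by
  simp only [locUnifNorm, ENNReal.ofReal_one, eLpNorm_one_eq_lintegral_enorm]

lemma exists_lintegral_ball_le_mul_iSup {E : Type*} [NormedAddCommGroup E] [ProperSpace E]
    [MeasurableSpace E] (μ : Measure E) (ρ : ℝ) :
    ∃ k : ℕ, ∀ (f : E → ℝ≥0∞) (y : E),
      ∫⁻ x in ball y ρ, f x ∂μ ≤ k * ⨆ z, ∫⁻ x in ball z 1, f x ∂μ := by
  obtain ⟨t, ht⟩ := (isCompact_closedBall (0 : E) ρ).elim_finite_subcover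
    (fun p => ball p 1) (fun _ => isOpen_ball)
    (fun x _ => Set.mem_iUnion.2 ⟨x, mem_ball_self one_pos⟩)
  refine ⟨t.card, fun f y => ?_⟩
  have hcover : ball y ρ ⊆ ⋃ p : t, ball (y + p) 1 := by
    intro z hz
    have hzy : z - y ∈ closedBall (0 : E) ρ := by
      rw [mem_closedBall, dist_zero_right, ← dist_eq_norm]; exact hz.le
    obtain ⟨p, hp, hzp⟩ := Set.mem_iUnion₂.1 (ht hzy)
    refine Set.mem_iUnion.2 ⟨⟨p, hp⟩, ?_⟩
    rw [mem_ball, dist_eq_norm, ← sub_sub, ← dist_eq_norm]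
    exact hzp
  calc ∫⁻ x in ball y ρ, f x ∂μ
      ≤ ∑' p : t, ∫⁻ x in ball (y + p) 1, f x ∂μ :=
        (lintegral_mono_set hcover).trans (lintegral_iUnion_le _ _)
    _ ≤ ∑' _p : t, ⨆ z, ∫⁻ x in ball z 1, f x ∂μ :=
        ENNReal.tsum_le_tsum fun p => le_iSup (fun z => ∫⁻ x in ball z 1, f x ∂μ) _
    _ = t.card * ⨆ z, ∫⁻ x in ball z 1, f x ∂μ := by
        rw [tsum_fintype, Finset.sum_const, Finset.card_univ, Fintype.card_coe, nsmul_eq_mul]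

lemma ApproxByBounded.exists_lintegral_ball_le {N : ℕ} {V : EuclideanSpace ℝ (Fin N) → ℝ}
    (h : ApproxByBounded 1 V) (ρ : ℝ) {ε : ℝ} (hε : 0 < ε) :
    ∃ (W : EuclideanSpace ℝ (Fin N) → ℝ) (C : ℝ), (∀ᵐ y : EuclideanSpace ℝ (Fin N), W y ≤ C) ∧
      ∀ y, ∫⁻ x in ball y ρ, ‖V x - W x‖ₑ ≤ ENNReal.ofReal ε := by
  obtain ⟨k, hk⟩ :=
    exists_lintegral_ball_le_mul_iSup (volume : Measure (EuclideanSpace ℝ (Fin N))) ρ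
  have hη : 0 < ε / (k + 1) := by positivity
  obtain ⟨W, -, ⟨C, hC⟩, hW⟩ := h _ hη
  refine ⟨W, C, hC.mono fun y hy => (le_abs_self _).trans hy, fun y => ?_⟩
  rw [locUnifNorm_one_eq] at hW
  calc ∫⁻ x in ball y ρ, ‖V x - W x‖ₑ
      ≤ k * ENNReal.ofReal (ε / (k + 1)) := (hk _ y).trans (by gcongr; exact hW.le)
    _ = ENNReal.ofReal (k * (ε / (k + 1))) := by
        rw [ENNReal.ofReal_mul (Nat.cast_nonneg k), ENNReal.ofReal_natCast]
    _ ≤ ENNReal.ofReal ε := by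
        gcongr
        rw [mul_div_assoc', div_le_iff₀ (by positivity)]
        nlinarith

lemma exists_pairwiseDisjoint_ball_subset_ball {E : Type*} [NormedAddCommGroup E]
    [NormedSpace ℝ E] [Nontrivial E] (x : E) {ρ : ℝ} (hρ : 0 ≤ ρ) (n : ℕ) :
    ∃ c : ℕ → E, (∀ i ∈ Finset.range n, ball (c i) ρ ⊆ ball x (2 * ρ * n)) ∧
      (Finset.range n : Set ℕ).PairwiseDisjoint fun i => ball (c i) ρ := by
  obtain ⟨e, he⟩ := exists_norm_eq E zero_le_one
  have hdist : ∀ i j : ℕ, dist (x + (2 * ρ * i) • e) (x + (2 * ρ * j) • e) =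
      2 * ρ * |(i : ℝ) - j| := by
    intro i j
    rw [dist_add_left, dist_eq_norm, ← sub_smul, norm_smul, he, mul_one, ← mul_sub,
      Real.norm_eq_abs, abs_mul, abs_of_nonneg (by positivity)]
  refine ⟨fun i => x + (2 * ρ * i) • e, fun i hi => ?_, fun i _ j _ hij => ?_⟩
  · have hi : (i : ℝ) + 1 ≤ n := by exact_mod_cast Finset.mem_range.1 hi
    refine ball_subset_ball' ?_
    have := hdist i 0
    simp only [Nat.cast_zero, mul_zero, zero_smul, add_zero, sub_zero,
      abs_of_nonneg (Nat.cast_nonneg (α := ℝ) i)] at this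
    rw [this]
    nlinarith
  · refine ball_disjoint_ball ?_
    have hij_int : (1 : ℤ) ≤ |(i : ℤ) - j| :=
      Int.one_le_abs (sub_ne_zero.2 (by exact_mod_cast hij))
    have hij_real : (1 : ℝ) ≤ |(i : ℝ) - j| := by exact_mod_cast hij_int
    rw [hdist]
    nlinarith

lemma exists_ball_lintegral_le_of_lintegral_ne_top {E : Type*} [NormedAddCommGroup E]
    [NormedSpace ℝ E] [Nontrivial E] [MeasurableSpace E] [OpensMeasurableSpace E]
    {μ : Measure E} {G : Set E} (hG : ∀ r : ℝ, 0 < r → ∃ x, ball x r ⊆ G) {f : E → ℝ≥0∞}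
    (hf : ∫⁻ x in G, f x ∂μ ≠ ⊤) {ρ : ℝ} (hρ : 0 < ρ) {δ : ℝ≥0∞} (hδ : δ ≠ 0) :
    ∃ y, ∫⁻ x in ball y ρ, f x ∂μ ≤ δ := by
  obtain ⟨n, hn⟩ := ENNReal.exists_nat_mul_gt hδ hf
  have hn0 : 0 < n := Nat.pos_of_ne_zero (by rintro rfl; simp at hn)
  obtain ⟨x, hx⟩ := hG (2 * ρ * n) (by positivity)
  obtain ⟨c, hsub, hdisj⟩ := exists_pairwiseDisjoint_ball_subset_ball x hρ.le n
  by_contra! hbig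
  have hsum : (n : ℝ≥0∞) * δ ≤ ∑ i ∈ Finset.range n, ∫⁻ x in ball (c i) ρ, f x ∂μ := by
    simpa using (Finset.range n).card_nsmul_le_sum _ δ fun i _ => (hbig (c i)).le
  rw [← lintegral_biUnion_finset hdisj (fun _ _ => measurableSet_ball)] at hsum
  exact (hsum.trans (lintegral_mono_set ((Set.iUnion₂_subset hsub).trans hx))).not_gt hn

lemma exists_ball_lintegral_le_of_forall_trunc {N : ℕ} (hN : 1 ≤ N)
    {V : EuclideanSpace ℝ (Fin N) → ℝ} (hV : Measurable V) (happrox : ApproxByBounded 1 V)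
    (htrunc : ∀ M : ℝ, 0 < M → ∃ G, InG G ∧ ∫⁻ x in G, ENNReal.ofReal (trunc M V x) ≠ ⊤)
    {ρ : ℝ} (hρ : 0 < ρ) {ε : ℝ} (hε : 0 < ε) :
    ∃ y, ∫⁻ x in ball y ρ, ENNReal.ofReal (V x) ≤ ENNReal.ofReal ε := by
  have : Nonempty (Fin N) := ⟨⟨0, hN⟩⟩
  obtain ⟨W, C, hC, hW⟩ := happrox.exists_lintegral_ball_le ρ (half_pos hε)
  obtain ⟨G, hG, hGfin⟩ := htrunc (max C 1) (lt_max_of_lt_right one_pos)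
  obtain ⟨y, hy⟩ := exists_ball_lintegral_le_of_lintegral_ne_top hG.2 hGfin hρ
    (ENNReal.ofReal_pos.2 (half_pos hε)).ne'
  have hmeas : Measurable fun x => ENNReal.ofReal (trunc (max C 1) V x) :=
    ENNReal.measurable_ofReal.comp (measurable_const.max (hV.min measurable_const))
  refine ⟨y, ?_⟩
  calc ∫⁻ x in ball y ρ, ENNReal.ofReal (V x)
      ≤ ∫⁻ x in ball y ρ, (ENNReal.ofReal (trunc (max C 1) V x) + ‖V x - W x‖ₑ) :=
        lintegral_mono_ae <| ae_restrict_of_ae <| hC.mono fun x hx =>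
          ofReal_le_ofReal_trunc_add_enorm (hx.trans (le_max_left _ _))
    _ = (∫⁻ x in ball y ρ, ENNReal.ofReal (trunc (max C 1) V x)) +
        ∫⁻ x in ball y ρ, ‖V x - W x‖ₑ := lintegral_add_left hmeas _
    _ ≤ ENNReal.ofReal (ε / 2) + ENNReal.ofReal (ε / 2) := add_le_add hy (hW y)
    _ = ENNReal.ofReal ε := by
        rw [← ENNReal.ofReal_add (by positivity) (by positivity), add_halves]

lemma exists_inG_lintegral_ne_top {N : ℕ} {f : EuclideanSpace ℝ (Fin N) → ℝ≥0∞}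
    (h : ∀ ρ : ℝ, 0 < ρ → ∀ ε : ℝ, 0 < ε → ∃ y, ∫⁻ x in ball y ρ, f x ≤ ENNReal.ofReal ε) :
    ∃ G, InG G ∧ ∫⁻ x in G, f x ≠ ⊤ := by
  choose y hy using fun m : ℕ => h (m + 1) (by positivity) ((1 / 2) ^ m) (by positivity)
  refine ⟨⋃ m : ℕ, ball (y m) (m + 1), ⟨isOpen_iUnion fun _ => isOpen_ball, fun r _ => ?_⟩, ?_⟩
  · obtain ⟨m, hm⟩ := exists_nat_gt r
    exact ⟨y m, (ball_subset_ball (by linarith)).trans (Set.subset_iUnion_of_subset m le_rfl)⟩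
  · refine ne_top_of_le_ne_top (ENNReal.ofReal_ne_top (r := ∑' m : ℕ, (1 / 2 : ℝ) ^ m)) ?_
    calc ∫⁻ x in ⋃ m : ℕ, ball (y m) (m + 1), f x
        ≤ ∑' m : ℕ, ∫⁻ x in ball (y m) (m + 1), f x := lintegral_iUnion_le _ _
      _ ≤ ∑' m : ℕ, ENNReal.ofReal ((1 / 2) ^ m) := ENNReal.tsum_le_tsum hy
      _ = ENNReal.ofReal (∑' m : ℕ, (1 / 2 : ℝ) ^ m) :=
        (ENNReal.ofReal_tsum_of_nonneg (fun _ => by positivity) summable_geometric_two).symm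

theorem stmt8_general {N : ℕ} (hN : 1 ≤ N)
    (V : EuclideanSpace ℝ (Fin N) → ℝ) (hV : Measurable V) (hV0 : ∀ x, 0 ≤ V x)
    (happrox : ApproxByBounded 1 V) :
    (∃ M : ℝ, 0 < M ∧ ∀ G : Set (EuclideanSpace ℝ (Fin N)), InG G →
        ∫⁻ x in G, ENNReal.ofReal (trunc M V x) = ⊤) ↔
    (∀ G : Set (EuclideanSpace ℝ (Fin N)), InG G →
        ∫⁻ x in G, ENNReal.ofReal (V x) = ⊤) := by
  constructor
  · rintro ⟨M, hM, htrunc⟩ G hG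
    refine top_unique ((htrunc G hG).symm.le.trans (lintegral_mono fun x => ?_))
    exact ENNReal.ofReal_le_ofReal (trunc_le (by linarith [hV0 x]))
  · intro hV_top
    by_contra! htrunc
    obtain ⟨G, hG, hfin⟩ := exists_inG_lintegral_ne_top fun ρ hρ ε hε =>
      exists_ball_lintegral_le_of_forall_trunc hN hV happrox htrunc hρ hε
    exact hfin (hV_top G hG)

theorem stmt8 {N : ℕ} (hN : 1 ≤ N)
    (V : EuclideanSpace ℝ (Fin N) → ℝ) (hV : Measurable V) (hV0 : ∀ x, 0 ≤ V x)
    (hVU : locUnifNorm 1 V < ⊤)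
    (happrox : ApproxByBounded 1 V) :
    (∃ M : ℝ, 0 < M ∧ ∀ G : Set (EuclideanSpace ℝ (Fin N)), InG G →
        ∫⁻ x in G, ENNReal.ofReal (trunc M V x) = ⊤) ↔
    (∀ G : Set (EuclideanSpace ℝ (Fin N)), InG G →
        ∫⁻ x in G, ENNReal.ofReal (V x) = ⊤) :=
  stmt8_general hN V hV hV0 happrox
end

section
/- Let N ≥ 1. There exists a measurable function V : ℝ^N → [0,∞) with ‖V‖_{L^1_U(ℝ^N)} < ∞ and a radius r₀ > 0 such that ∫_{B(x,r₀)} V(y) dy ≥ 1 for every x ∈ ℝ^N, while for every M > 0 and every r > 0 one has inf_{x ∈ ℝ^N} ∫_{B(x,r)} V_M(y) dy = 0. (A witness is V(x) = c |i|^N on B(i, 1/|i|) for each nonzero integer point i ∈ ℤ^N, V = (1/c)·𝟙_{B(0,1)} near 0, with c the measure of the unit ball, and V = 0 elsewhere.) -/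
open MeasureTheory Metric Filter ENNReal

/-!
The witness is `V y = spike (y j)` for a fixed coordinate `j`, where on each unit cell `[n, n + 1)`
the function `spike` equals `1 + |n|` on an initial piece of length `(1 + |n|)⁻¹` and vanishes on
the rest. Every cell carries mass one: this bounds the mass of unit balls, and a ball of radius
`√N + 1` contains a slab over a whole cell. Truncation at `M` leaves mass at most `M / (1 + |n|)`
in cell `n`, so the truncated mass of balls of fixed radius escaping along coordinate `j` tends to
zero. Integrals over balls of functions of one coordinate are compared with integrals over the
inscribed and circumscribed cubes, on which they factor.
-/

open Set

section EuclideanBox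

variable {ι : Type*} [Fintype ι]

theorem setLIntegral_box_comp_apply [DecidableEq ι] (f : ℝ → ℝ≥0∞) (hf : Measurable f)
    (I : ι → Set ℝ) (hI : ∀ i, MeasurableSet (I i)) (j : ι) :
    ∫⁻ y in {y : EuclideanSpace ℝ ι | ∀ i, y i ∈ I i}, f (y j)
      = (∏ i ∈ Finset.univ.erase j, volume (I i)) * ∫⁻ t in I j, f t := by
  have hpre : (MeasurableEquiv.toLp 2 (ι → ℝ)).symm ⁻¹' univ.pi I
      = {y : EuclideanSpace ℝ ι | ∀ i, y i ∈ I i} := by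
    ext y; simp
  rw [← hpre]
  refine ((EuclideanSpace.volume_preserving_symm_measurableEquiv_toLp ι).setLIntegral_comp_preimage
      (.univ_pi hI) (f := fun z ↦ f (z j)) (hf.comp (measurable_pi_apply j))).trans ?_
  rw [volume_pi, Measure.restrict_pi_pi, ← lintegral_map hf (measurable_pi_apply j),
    Measure.pi_map_eval, lintegral_smul_measure]
  simp only [Measure.restrict_apply_univ, smul_eq_mul]

theorem ball_subset_box (x : EuclideanSpace ℝ ι) (ρ : ℝ) :
    ball x ρ ⊆ {y | ∀ i, y i ∈ Icc (x i - ρ) (x i + ρ)} := by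
  intro y hy i
  have h := abs_sub_lt_iff.1 ((PiLp.dist_apply_le y x i).trans_lt (mem_ball.1 hy))
  constructor <;> linarith

theorem box_subset_closedBall (x : EuclideanSpace ℝ ι) {ρ : ℝ} (hρ : 0 ≤ ρ) :
    {y | ∀ i, y i ∈ Icc (x i - ρ) (x i + ρ)} ⊆ closedBall x (√(Fintype.card ι) * ρ) := by
  intro y hy
  have hcoord : ∀ i, dist (y i) (x i) ^ 2 ≤ ρ ^ 2 := fun i ↦ by
    rw [Real.dist_eq, sq_abs]
    have := hy i
    nlinarith [this.1, this.2]
  rw [mem_closedBall, EuclideanSpace.dist_eq, ← Real.sqrt_sq hρ, ← Real.sqrt_mul (by positivity)]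
  refine Real.sqrt_le_sqrt ((Finset.sum_le_sum fun i _ ↦ hcoord i).trans ?_)
  simp

theorem setLIntegral_ball_comp_apply_le (f : ℝ → ℝ≥0∞) (hf : Measurable f)
    (x : EuclideanSpace ℝ ι) (ρ : ℝ) (j : ι) :
    ∫⁻ y in ball x ρ, f (y j)
      ≤ ENNReal.ofReal (2 * ρ) ^ (Fintype.card ι - 1) * ∫⁻ t in Icc (x j - ρ) (x j + ρ), f t := by
  classical
  refine (lintegral_mono_set (ball_subset_box x ρ)).trans_eq ?_
  rw [setLIntegral_box_comp_apply f hf _ (fun _ ↦ measurableSet_Icc)]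
  simp [Real.volume_Icc, Finset.card_erase_of_mem, two_mul]

theorem le_setLIntegral_closedBall_comp_apply (f : ℝ → ℝ≥0∞) (hf : Measurable f)
    (x : EuclideanSpace ℝ ι) {ρ : ℝ} (hρ : 0 ≤ ρ) (j : ι) :
    ENNReal.ofReal (2 * ρ) ^ (Fintype.card ι - 1) * ∫⁻ t in Icc (x j - ρ) (x j + ρ), f t
      ≤ ∫⁻ y in closedBall x (√(Fintype.card ι) * ρ), f (y j) := by
  classical
  refine le_of_eq_of_le ?_ (lintegral_mono_set (box_subset_closedBall x hρ))
  rw [setLIntegral_box_comp_apply f hf _ (fun _ ↦ measurableSet_Icc)]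
  simp [Real.volume_Icc, Finset.card_erase_of_mem, two_mul]

end EuclideanBox

noncomputable def spike (t : ℝ) : ℝ :=
  if Int.fract t < (1 + |(⌊t⌋ : ℝ)|)⁻¹ then 1 + |(⌊t⌋ : ℝ)| else 0

theorem spike_nonneg (t : ℝ) : 0 ≤ spike t := by
  unfold spike; split_ifs <;> positivity

theorem measurable_spike : Measurable spike := by
  have hfloor : Measurable fun t : ℝ ↦ 1 + |(⌊t⌋ : ℝ)| := by fun_prop
  exact Measurable.ite (measurableSet_lt measurable_fract hfloor.inv) hfloor measurable_const

theorem spike_eq_indicator {n : ℤ} {t : ℝ} (ht : t ∈ Ico (n : ℝ) (n + 1)) :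
    spike t = (Ico (n : ℝ) (n + (1 + |(n : ℝ)|)⁻¹)).indicator (fun _ ↦ 1 + |(n : ℝ)|) t := by
  have hfloor : ⌊t⌋ = n := Int.floor_eq_iff.2 ht
  simp only [spike, hfloor, Int.fract, indicator, mem_Ico, ht.1, true_and, sub_lt_iff_lt_add']

theorem setLIntegral_Ico_comp_spike (φ : ℝ → ℝ≥0∞) (hφ : φ 0 = 0) (n : ℤ) :
    ∫⁻ t in Ico (n : ℝ) (n + 1), φ (spike t)
      = φ (1 + |(n : ℝ)|) * ENNReal.ofReal (1 + |(n : ℝ)|)⁻¹ := by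
  have hslab : Ico (n : ℝ) (n + (1 + |(n : ℝ)|)⁻¹) ⊆ Ico (n : ℝ) (n + 1) :=
    Ico_subset_Ico_right (by gcongr; exact inv_le_one_of_one_le₀ (by simp))
  rw [setLIntegral_congr_fun (g := (Ico (n : ℝ) (n + (1 + |(n : ℝ)|)⁻¹)).indicator
      fun _ ↦ φ (1 + |(n : ℝ)|)) measurableSet_Ico fun t ht ↦ by
      rw [spike_eq_indicator ht, indicator_apply, indicator_apply]; split_ifs <;> simp [hφ],
    lintegral_indicator_const measurableSet_Ico, Measure.restrict_apply measurableSet_Ico,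
    inter_eq_left.2 hslab, Real.volume_Ico, add_sub_cancel_left]

theorem setLIntegral_Icc_le_of_Ico_le (F : ℝ → ℝ≥0∞) {a b : ℝ} {B : ℝ≥0∞}
    (hcell : ∀ n : ℤ, ⌊a⌋ ≤ n → ∫⁻ t in Ico (n : ℝ) (n + 1), F t ≤ B) :
    ∫⁻ t in Icc a b, F t ≤ (Finset.Icc ⌊a⌋ ⌊b⌋).card * B := by
  have hcover : Icc a b ⊆ ⋃ n ∈ Finset.Icc ⌊a⌋ ⌊b⌋, Ico (n : ℝ) (n + 1) := fun t ht ↦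
    mem_biUnion (Finset.mem_Icc.2 ⟨Int.floor_mono ht.1, Int.floor_mono ht.2⟩)
      ⟨Int.floor_le t, Int.lt_floor_add_one t⟩
  calc ∫⁻ t in Icc a b, F t ≤ ∫⁻ t in ⋃ n ∈ Finset.Icc ⌊a⌋ ⌊b⌋, Ico (n : ℝ) (n + 1), F t :=
        lintegral_mono_set hcover
    _ = ∑ n ∈ Finset.Icc ⌊a⌋ ⌊b⌋, ∫⁻ t in Ico (n : ℝ) (n + 1), F t :=
        lintegral_biUnion_finset ((pairwise_disjoint_Ico_intCast ℝ).set_pairwise _)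
          (fun _ _ ↦ measurableSet_Ico) F
    _ ≤ (Finset.Icc ⌊a⌋ ⌊b⌋).card * B := by
        rw [← nsmul_eq_mul]
        exact Finset.sum_le_card_nsmul _ _ _ fun n hn ↦ hcell n (Finset.mem_Icc.1 hn).1

theorem setLIntegral_Ico_spike (n : ℤ) :
    ∫⁻ t in Ico (n : ℝ) (n + 1), ENNReal.ofReal (spike t) = 1 := by
  rw [setLIntegral_Ico_comp_spike _ ENNReal.ofReal_zero, ← ENNReal.ofReal_mul (by positivity),
    mul_inv_cancel₀ (by positivity), ENNReal.ofReal_one]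

theorem setLIntegral_Ico_min_spike_le {M : ℝ} (hM : 0 ≤ M) (n : ℤ) :
    ∫⁻ t in Ico (n : ℝ) (n + 1), ENNReal.ofReal (min (spike t) M)
      ≤ ENNReal.ofReal (M / (1 + |(n : ℝ)|)) := by
  rw [setLIntegral_Ico_comp_spike (fun s ↦ ENNReal.ofReal (min s M)) (by simp [hM]),
    ← ENNReal.ofReal_mul (by positivity), div_eq_mul_inv]
  gcongr
  exact min_le_right _ _

theorem one_le_setLIntegral_Icc_spike (c : ℝ) :
    1 ≤ ∫⁻ t in Icc (c - 1) (c + 1), ENNReal.ofReal (spike t) := by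
  have hcell : Ico (⌈c - 1⌉ : ℝ) (⌈c - 1⌉ + 1) ⊆ Icc (c - 1) (c + 1) := fun t ht ↦
    ⟨(Int.le_ceil _).trans ht.1, by linarith [ht.2, Int.ceil_lt_add_one (c - 1)]⟩
  exact (setLIntegral_Ico_spike ⌈c - 1⌉).symm.trans_le (lintegral_mono_set hcell)

theorem setLIntegral_Icc_spike_le (c : ℝ) :
    ∫⁻ t in Icc (c - 1) (c + 1), ENNReal.ofReal (spike t) ≤ 3 := by
  refine (setLIntegral_Icc_le_of_Ico_le _ fun n _ ↦ (setLIntegral_Ico_spike n).le).trans_eq ?_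
  rw [show c + 1 = c - 1 + 2 by ring, Int.floor_add_ofNat, Int.card_Icc, mul_one, add_assoc,
    add_sub_cancel_left]
  simp

theorem setLIntegral_Icc_min_spike_le {M : ℝ} (hM : 0 ≤ M) (n : ℕ) (L : ℝ) :
    ∫⁻ t in Icc (n : ℝ) (n + L), ENNReal.ofReal (min (spike t) M)
      ≤ (⌊L⌋ + 1).toNat * ENNReal.ofReal (M / (n + 1)) := by
  refine (setLIntegral_Icc_le_of_Ico_le (B := ENNReal.ofReal (M / (n + 1))) _ fun p hp ↦
    (setLIntegral_Ico_min_spike_le hM p).trans ?_).trans_eq ?_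
  · have : (n : ℝ) ≤ p := by exact_mod_cast (Int.floor_natCast (R := ℝ) n).symm.trans_le hp
    exact ENNReal.ofReal_le_ofReal
      (div_le_div_of_nonneg_left hM (by positivity) (by linarith [le_abs_self (p : ℝ)]))
  · rw [Int.floor_natCast, Int.floor_natCast_add, Int.card_Icc, add_assoc, add_sub_cancel_left]

theorem tendsto_setLIntegral_Icc_min_spike {M : ℝ} (hM : 0 ≤ M) (L : ℝ) :
    Tendsto (fun n : ℕ ↦ ∫⁻ t in Icc (n : ℝ) (n + L), ENNReal.ofReal (min (spike t) M))
      atTop (nhds 0) := by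
  have hdecay : Tendsto (fun n : ℕ ↦ ENNReal.ofReal (M / (n + 1))) atTop (nhds 0) := by
    simpa [div_eq_mul_inv] using
      ENNReal.tendsto_ofReal (tendsto_one_div_add_atTop_nhds_zero_nat.const_mul M)
  have hbound :=
    ENNReal.Tendsto.const_mul hdecay (Or.inr (ENNReal.natCast_ne_top (⌊L⌋ + 1).toNat))
  rw [mul_zero] at hbound
  exact tendsto_of_tendsto_of_tendsto_of_le_of_le tendsto_const_nhds hbound (fun _ ↦ bot_le)
    (setLIntegral_Icc_min_spike_le hM · L)
theorem trunc_of_nonneg {α : Type*} {M : ℝ} (hM : 0 ≤ M) {V : α → ℝ} {x : α} (hV : 0 ≤ V x) :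
    trunc M V x = min (V x) M :=
  max_eq_right ((neg_nonpos.2 hM).trans (le_min hV hM))

section Witness

variable {ι : Type*} [Fintype ι]

theorem locUnifNorm_one_spike_comp_apply_lt_top {N : ℕ} (j : Fin N) :
    locUnifNorm 1 (fun y : EuclideanSpace ℝ (Fin N) ↦ spike (y j)) < ⊤ := by
  have hball : ∀ x₀ : EuclideanSpace ℝ (Fin N),
      eLpNorm (fun y ↦ spike (y j)) (ENNReal.ofReal 1) (volume.restrict (ball x₀ 1))
        ≤ ENNReal.ofReal (2 * 1) ^ (N - 1) * 3 := fun x₀ ↦ by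
    simp only [ENNReal.ofReal_one, eLpNorm_one_eq_lintegral_enorm,
      Real.enorm_eq_ofReal (spike_nonneg _)]
    simpa using (setLIntegral_ball_comp_apply_le _ measurable_spike.ennreal_ofReal x₀ 1 j).trans
      (mul_le_mul' le_rfl (setLIntegral_Icc_spike_le (x₀ j)))
  exact (iSup_le hball).trans_lt (by finiteness)

theorem one_le_setLIntegral_ball_spike_comp_apply (j : ι) (x : EuclideanSpace ℝ ι) :
    1 ≤ ∫⁻ y in ball x (√(Fintype.card ι) + 1), ENNReal.ofReal (spike (y j)) :=
  calc 1 ≤ ENNReal.ofReal (2 * 1) ^ (Fintype.card ι - 1)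
        * ∫⁻ t in Icc (x j - 1) (x j + 1), ENNReal.ofReal (spike t) :=
        one_le_mul (one_le_pow₀ (by norm_num)) (one_le_setLIntegral_Icc_spike _)
    _ ≤ ∫⁻ y in closedBall x (√(Fintype.card ι) * 1), ENNReal.ofReal (spike (y j)) :=
        le_setLIntegral_closedBall_comp_apply _ measurable_spike.ennreal_ofReal x zero_le_one j
    _ ≤ _ := lintegral_mono_set (closedBall_subset_ball (by linarith))

theorem iInf_setLIntegral_ball_trunc_spike_comp_apply (j : ι) {M : ℝ} (hM : 0 ≤ M) (r : ℝ) :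
    ⨅ x : EuclideanSpace ℝ ι,
      ∫⁻ y in ball x r, ENNReal.ofReal (trunc M (fun y ↦ spike (y j)) y) = 0 := by
  have hlim := ENNReal.Tendsto.const_mul (tendsto_setLIntegral_Icc_min_spike hM (2 * r))
    (Or.inr (ENNReal.pow_ne_top (ENNReal.ofReal_ne_top (r := 2 * r)) (n := Fintype.card ι - 1)))
  rw [mul_zero] at hlim
  refine le_antisymm (ge_of_tendsto' hlim fun n ↦ ?_) bot_le
  obtain ⟨x, hx⟩ : ∃ x : EuclideanSpace ℝ ι, x j = n + r := ⟨WithLp.toLp 2 fun _ ↦ n + r, rfl⟩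
  calc _ ≤ ∫⁻ y in ball x r, ENNReal.ofReal (min (spike (y j)) M) :=
        (iInf_le _ x).trans_eq (lintegral_congr fun y ↦
          congrArg ENNReal.ofReal (trunc_of_nonneg hM (spike_nonneg _)))
    _ ≤ ENNReal.ofReal (2 * r) ^ (Fintype.card ι - 1)
          * ∫⁻ t in Icc (x j - r) (x j + r), ENNReal.ofReal (min (spike t) M) :=
        setLIntegral_ball_comp_apply_le _
          (measurable_spike.min measurable_const).ennreal_ofReal x r j
    _ = _ := by rw [hx, add_sub_cancel_right, add_assoc, ← two_mul]

end Witness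

theorem stmt10 {N : ℕ} (hN : 1 ≤ N) :
    ∃ V : EuclideanSpace ℝ (Fin N) → ℝ, Measurable V ∧ (∀ x, 0 ≤ V x) ∧
      locUnifNorm 1 V < ⊤ ∧
      ∃ r₀ : ℝ, 0 < r₀ ∧
        (∀ x : EuclideanSpace ℝ (Fin N),
            1 ≤ ∫⁻ y in ball x r₀, ENNReal.ofReal (V y)) ∧
        ∀ M : ℝ, 0 < M → ∀ r : ℝ, 0 < r →
          (⨅ x : EuclideanSpace ℝ (Fin N),
              ∫⁻ y in ball x r, ENNReal.ofReal (trunc M V y)) = 0 := by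
  let j : Fin N := ⟨0, hN⟩
  exact ⟨fun y ↦ spike (y j), measurable_spike.comp (by fun_prop), fun y ↦ spike_nonneg _,
    locUnifNorm_one_spike_comp_apply_lt_top j, √(Fintype.card (Fin N)) + 1, by positivity,
    one_le_setLIntegral_ball_spike_comp_apply j,
    fun M hM r _ ↦ iInf_setLIntegral_ball_trunc_spike_comp_apply j hM.le r⟩
end

section
/- Let X be a Banach space and let T : [0,∞) → 𝓛(X) be a family of continuous linear operators with ‖T(t)‖_{𝓛(X)} = 1 for every t ≥ 0. Let g : [0,∞) → (0,1] be continuous with lim_{t→∞} g(t) = 0. Then there exists u₀ ∈ X such that limsup_{t→∞} ‖T(t)u₀‖ / g(t) = ∞. -/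
/-! The operators `g(n)⁻¹ • T(n)` have norms `g(n)⁻¹ → ∞`, so by the uniform boundedness
principle some orbit `‖T(n) u₀‖ / g(n)` is unbounded along the integers. -/

open Filter

theorem ENNReal.limsup_ofReal_eq_top {α : Type*} {l : Filter α} {u : α → ℝ}
    (hu : ¬ IsBoundedUnder (· ≤ ·) l u) : limsup (fun a ↦ ENNReal.ofReal (u a)) l = ⊤ := by
  contrapose! hu
  obtain ⟨r, hr, -⟩ := ENNReal.lt_iff_exists_nnreal_btwn.1 hu.lt_top
  refine isBoundedUnder_of_eventually_le (a := (r : ℝ)) ?_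
  filter_upwards [eventually_lt_of_limsup_lt hr] with a ha
  exact (ENNReal.ofReal_le_iff_le_toReal ENNReal.coe_ne_top).1 ha.le

/-- On `ℕ` an eventually bounded sequence is bounded, so Banach–Steinhaus applies. -/
theorem ContinuousLinearMap.exists_not_isBoundedUnder_norm_apply
    {𝕜 E F : Type*} [NontriviallyNormedField 𝕜] [NormedAddCommGroup E] [NormedSpace 𝕜 E]
    [CompleteSpace E] [NormedAddCommGroup F] [NormedSpace 𝕜 F] {A : ℕ → E →L[𝕜] F}
    (hA : Tendsto (fun n ↦ ‖A n‖) atTop atTop) :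
    ∃ x, ¬ IsBoundedUnder (· ≤ ·) atTop (fun n ↦ ‖A n x‖) := by
  by_contra! hbdd
  obtain ⟨C, hC⟩ := banach_steinhaus (g := A) fun x ↦ by
    obtain ⟨C, hC⟩ := (hbdd x).bddAbove_range
    exact ⟨C, fun n ↦ hC ⟨n, rfl⟩⟩
  obtain ⟨n, hn⟩ := (hA.eventually_gt_atTop C).exists
  exact (hC n).not_gt hn

theorem stmt12_general {X : Type*} [NormedAddCommGroup X] [NormedSpace ℝ X] [CompleteSpace X]
    (T : ℝ → X →L[ℝ] X) (hT : ∀ t ≥ (0 : ℝ), ‖T t‖ = 1)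
    (g : ℝ → ℝ)
    (hg_pos : ∀ t ≥ (0 : ℝ), 0 < g t ∧ g t ≤ 1)
    (hg_lim : Tendsto g atTop (nhds 0)) :
    ∃ u₀ : X,
      Filter.limsup (fun t : ℝ => ENNReal.ofReal (‖T t u₀‖ / g t)) atTop = ⊤ := by
  have hg_nat : ∀ n : ℕ, 0 < g n := fun n ↦ (hg_pos n n.cast_nonneg).1
  have norm_smul_apply (n : ℕ) (x : X) : ‖(g n)⁻¹ • T n x‖ = ‖T n x‖ / g n := by
    rw [norm_smul, norm_inv, Real.norm_of_nonneg (hg_nat n).le, inv_mul_eq_div]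
  have hnorm : Tendsto (fun n : ℕ ↦ ‖(g n)⁻¹ • T n‖) atTop atTop := by
    have hg_pos_lim : Tendsto (fun n : ℕ ↦ g n) atTop (nhdsWithin 0 (Set.Ioi 0)) :=
      tendsto_nhdsWithin_iff.2
        ⟨hg_lim.comp tendsto_natCast_atTop_atTop, .of_forall hg_nat⟩
    refine hg_pos_lim.inv_tendsto_nhdsGT_zero.congr fun n ↦ ?_
    change (g n)⁻¹ = _
    rw [norm_smul, hT n n.cast_nonneg, mul_one, norm_inv, Real.norm_of_nonneg (hg_nat n).le]
  obtain ⟨u₀, hu₀⟩ := ContinuousLinearMap.exists_not_isBoundedUnder_norm_apply hnorm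
  refine ⟨u₀, ENNReal.limsup_ofReal_eq_top fun hbdd ↦ hu₀ ?_⟩
  simpa only [Function.comp_def, smul_apply, norm_smul_apply] using
    tendsto_natCast_atTop_atTop.isBoundedUnder_comp hbdd

theorem stmt12 {X : Type*} [NormedAddCommGroup X] [NormedSpace ℝ X] [CompleteSpace X]
    (T : ℝ → X →L[ℝ] X) (hT : ∀ t ≥ (0 : ℝ), ‖T t‖ = 1)
    (g : ℝ → ℝ) (hg_cont : ContinuousOn g (Set.Ici 0))
    (hg_pos : ∀ t ≥ (0 : ℝ), 0 < g t ∧ g t ≤ 1)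
    (hg_lim : Tendsto g atTop (nhds 0)) :
    ∃ u₀ : X,
      Filter.limsup (fun t : ℝ => ENNReal.ofReal (‖T t u₀‖ / g t)) atTop = ⊤ :=
  stmt12_general T hT g hg_pos hg_lim
end

section
/- Let N ≥ 1, 1 ≤ p₀ < ∞, and t > 0. There exists a constant C > 0, depending only on N, p₀ and t, such that for every measurable V : ℝ^N → ℝ with ‖V‖_{L^{p₀}_U(ℝ^N)} < ∞ and every x ∈ ℝ^N, ∫_{ℝ^N} (4πt)^{−N/2} e^{−|x−y|²/(4t)} |V(y)| dy ≤ C ‖V‖_{L^{p₀}_U(ℝ^N)}. In particular, the Gaussian (heat) convolution of any function in L^{p₀}_U(ℝ^N) at any positive time is a bounded function on ℝ^N. -/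
/-!
Average over unit balls: every `y` lies in `ball z 1` for a set of centres `z` of measure
`|B₁|`, so `|B₁| ∫ k f = ∫_z ∫_{B(z,1)} k f`. On `B(z,1)` the heat kernel centred at `x` is
dominated by `e^{1/(4t)} e^{-|x-z|²/(8t)}`, because `|x-z|² ≤ 2|x-y|² + 2`, while Hölder on the
ball bounds `∫_{B(z,1)} |V|` by `|B₁|^{1-1/p₀} ‖V‖_{L^{p₀}_U}`. What remains is the integral of a
Gaussian in `z`, which is finite.
-/

open MeasureTheory Metric Filter ENNReal

section HaarAveraging

variable {E : Type*} [NormedAddCommGroup E] [NormedSpace ℝ E] [FiniteDimensional ℝ E]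
  [MeasurableSpace E] [BorelSpace E] (μ : Measure E) [μ.IsAddHaarMeasure]

theorem lintegral_setLIntegral_ball {f : E → ℝ≥0∞} (hf : Measurable f) (r : ℝ) :
    ∫⁻ z, ∫⁻ y in ball z r, f y ∂μ ∂μ = μ (ball 0 r) * ∫⁻ y, f y ∂μ := by
  set S : Set (E × E) := {q | dist q.1 q.2 < r}
  have hS : MeasurableSet S := (isOpen_lt continuous_dist continuous_const).measurableSet
  calc ∫⁻ z, ∫⁻ y in ball z r, f y ∂μ ∂μ
      = ∫⁻ z, ∫⁻ y, S.indicator (fun q => f q.2) (z, y) ∂μ ∂μ := by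
        refine lintegral_congr fun z => ?_
        rw [← lintegral_indicator measurableSet_ball]
        refine lintegral_congr fun y => ?_
        simp only [S, Set.indicator, Set.mem_ofPred_eq, mem_ball, dist_comm]
    _ = ∫⁻ y, ∫⁻ z, S.indicator (fun q => f q.2) (z, y) ∂μ ∂μ :=
        lintegral_lintegral_swap ((hf.comp measurable_snd).indicator hS).aemeasurable
    _ = ∫⁻ y, μ (ball 0 r) * f y ∂μ := by
        refine lintegral_congr fun y => ?_
        have hS_ball (z : E) :
            S.indicator (fun q => f q.2) (z, y) = (ball y r).indicator (fun _ => f y) z := by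
          simp only [S, Set.indicator, Set.mem_ofPred_eq, mem_ball]
        simp_rw [hS_ball, lintegral_indicator_const measurableSet_ball,
          Measure.addHaar_ball_center, mul_comm]
    _ = μ (ball 0 r) * ∫⁻ y, f y ∂μ := lintegral_const_mul _ hf

theorem lintegral_mul_le_of_forall_dist_lt {k g f : E → ℝ≥0∞} (hk : Measurable k)
    (hg : Measurable g) (hf : Measurable f) {r : ℝ} (hr : 0 < r)
    (hkg : ∀ y z, dist y z < r → k y ≤ g z) :
    ∫⁻ y, k y * f y ∂μ ≤ (∫⁻ z, g z ∂μ) / μ (ball 0 r) * ⨆ z, ∫⁻ y in ball z r, f y ∂μ := by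
  rw [← ENNReal.mul_div_right_comm, ENNReal.le_div_iff_mul_le
    (.inl (measure_ball_pos μ 0 hr).ne') (.inl measure_ball_lt_top.ne), mul_comm,
    ← lintegral_setLIntegral_ball μ (f := fun y => k y * f y) (hk.mul hf),
    ← lintegral_mul_const _ hg]
  refine lintegral_mono fun z => ?_
  calc ∫⁻ y in ball z r, k y * f y ∂μ
      ≤ ∫⁻ y in ball z r, g z * f y ∂μ :=
        setLIntegral_mono (hf.const_mul _) fun y hy => by
          gcongr; exact hkg y z (by rwa [mem_ball] at hy)
    _ = g z * ∫⁻ y in ball z r, f y ∂μ := lintegral_const_mul _ hf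
    _ ≤ g z * ⨆ z, ∫⁻ y in ball z r, f y ∂μ := by
        gcongr
        exact le_iSup (fun z => ∫⁻ y in ball z r, f y ∂μ) z

end HaarAveraging

theorem Real.exp_neg_sq_norm_div_le {F : Type*} [SeminormedAddCommGroup F] {s : ℝ} (hs : 0 < s)
    {u v : F} (huv : ‖u - v‖ ≤ 1) :
    Real.exp (-‖u‖ ^ 2 / s) ≤ Real.exp (1 / s) * Real.exp (-‖v‖ ^ 2 / (2 * s)) := by
  rw [← Real.exp_add, Real.exp_le_exp]
  have hv : ‖v‖ ≤ ‖u‖ + 1 := by linarith [norm_sub_norm_le v u, norm_sub_rev v u]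
  have hv2 : ‖v‖ ^ 2 ≤ 2 * ‖u‖ ^ 2 + 2 := by nlinarith [norm_nonneg v, sq_nonneg (‖u‖ - 1)]
  have hdiff : -‖u‖ ^ 2 / s - (1 / s + -‖v‖ ^ 2 / (2 * s)) =
      (‖v‖ ^ 2 - 2 * ‖u‖ ^ 2 - 2) / (2 * s) := by
    field_simp; ring
  have := div_nonpos_of_nonpos_of_nonneg (by linarith : ‖v‖ ^ 2 - 2 * ‖u‖ ^ 2 - 2 ≤ 0)
    (by positivity : 0 ≤ 2 * s)
  linarith

theorem lintegral_exp_neg_sq_norm_sub_mul_le {V : Type*} [NormedAddCommGroup V]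
    [InnerProductSpace ℝ V] [FiniteDimensional ℝ V] [MeasurableSpace V] [BorelSpace V]
    {s : ℝ} (hs : 0 < s) (x : V) {f : V → ℝ≥0∞} (hf : Measurable f) :
    ∫⁻ y, ENNReal.ofReal (Real.exp (-‖x - y‖ ^ 2 / s)) * f y ≤
      (∫⁻ w : V, ENNReal.ofReal (Real.exp (1 / s) * Real.exp (-‖w‖ ^ 2 / (2 * s)))) /
        volume (ball (0 : V) 1) * ⨆ z, ∫⁻ y in ball z 1, f y := by
  rw [← lintegral_sub_left_eq_self
    (fun w => ENNReal.ofReal (Real.exp (1 / s) * Real.exp (-‖w‖ ^ 2 / (2 * s)))) x]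
  refine lintegral_mul_le_of_forall_dist_lt volume (by fun_prop) (by fun_prop) hf one_pos
    fun y z hyz => ENNReal.ofReal_le_ofReal (Real.exp_neg_sq_norm_div_le hs ?_)
  rw [show x - y - (x - z) = z - y by abel, ← dist_eq_norm, dist_comm]
  exact hyz.le

theorem integrable_exp_neg_sq_norm_div {V : Type*} [NormedAddCommGroup V] [InnerProductSpace ℝ V]
    [FiniteDimensional ℝ V] [MeasurableSpace V] [BorelSpace V] {s : ℝ} (hs : 0 < s) :
    Integrable fun v : V => Real.exp (-‖v‖ ^ 2 / s) := by
  refine Integrable.of_integral_ne_zero ?_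
  have h := GaussianFourier.integral_rexp_neg_mul_sq_norm (V := V) (inv_pos.2 hs)
  simp only [neg_mul, ← div_eq_inv_mul, ← neg_div] at h
  rw [h]
  positivity

theorem setLIntegral_enorm_le_measure_rpow_mul_eLpNorm {α F : Type*} [MeasurableSpace α]
    [NormedAddCommGroup F] {μ : Measure α} {s : Set α} {p : ℝ≥0∞} (hp : 1 ≤ p) {f : α → F}
    (hf : AEStronglyMeasurable f (μ.restrict s)) :
    ∫⁻ x in s, ‖f x‖ₑ ∂μ ≤ μ s ^ (1 - 1 / p.toReal) * eLpNorm f p (μ.restrict s) := by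
  have h := eLpNorm_le_eLpNorm_mul_rpow_measure_univ hp hf
  rw [eLpNorm_one_eq_lintegral_enorm, Measure.restrict_apply_univ] at h
  simpa [mul_comm] using h

theorem iSup_setLIntegral_ball_le_locUnifNorm {N : ℕ} {p : ℝ} (hp : 1 ≤ p)
    {V : EuclideanSpace ℝ (Fin N) → ℝ} (hV : AEStronglyMeasurable V) :
    ⨆ z, ∫⁻ y in ball z 1, ‖V y‖ₑ ≤
      volume (ball (0 : EuclideanSpace ℝ (Fin N)) 1) ^ (1 - 1 / p) * locUnifNorm p V := by
  refine iSup_le fun z => (setLIntegral_enorm_le_measure_rpow_mul_eLpNorm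
    (ENNReal.one_le_ofReal.2 hp) hV.restrict).trans ?_
  rw [Measure.addHaar_ball_center, toReal_ofReal (by linarith)]
  gcongr
  exact le_iSup (fun z => eLpNorm V (ENNReal.ofReal p) (volume.restrict (ball z 1))) z

theorem stmt17_general {N : ℕ} {p₀ : ℝ} (hp : 1 ≤ p₀) {t : ℝ} (ht : 0 < t) :
    ∃ C : ℝ, 0 < C ∧
      ∀ V : EuclideanSpace ℝ (Fin N) → ℝ, Measurable V → locUnifNorm p₀ V < ⊤ →
        ∀ x : EuclideanSpace ℝ (Fin N),
          (∫⁻ y : EuclideanSpace ℝ (Fin N),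
              ENNReal.ofReal ((4 * Real.pi * t) ^ (-(N : ℝ) / 2) *
                Real.exp (-‖x - y‖ ^ 2 / (4 * t)) * |V y|)) ≤
            ENNReal.ofReal C * locUnifNorm p₀ V := by
  set a := (4 * Real.pi * t) ^ (-(N : ℝ) / 2)
  set B := volume (ball (0 : EuclideanSpace ℝ (Fin N)) 1)
  set G := ∫⁻ w : EuclideanSpace ℝ (Fin N),
    ENNReal.ofReal (Real.exp (1 / (4 * t)) * Real.exp (-‖w‖ ^ 2 / (2 * (4 * t))))
  set D := ENNReal.ofReal a * (G / B * B ^ (1 - 1 / p₀))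
  have hD : D ≠ ⊤ := by
    have hG : G ≠ ⊤ := ((integrable_exp_neg_sq_norm_div (by positivity)).const_mul
      (Real.exp (1 / (4 * t)))).lintegral_lt_top.ne
    have hB : B ≠ 0 := (measure_ball_pos volume _ one_pos).ne'
    have hexp : 0 ≤ 1 - 1 / p₀ := sub_nonneg.2 (div_le_one_of_le₀ hp (by linarith))
    exact ENNReal.mul_ne_top ofReal_ne_top (ENNReal.mul_ne_top (ENNReal.div_ne_top hG hB)
      (ENNReal.rpow_ne_top_of_nonneg hexp measure_ball_lt_top.ne))
  refine ⟨D.toReal + 1, by positivity, fun V hV _ x => ?_⟩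
  calc (∫⁻ y, ENNReal.ofReal (a * Real.exp (-‖x - y‖ ^ 2 / (4 * t)) * |V y|))
      = ENNReal.ofReal a * ∫⁻ y, ENNReal.ofReal (Real.exp (-‖x - y‖ ^ 2 / (4 * t))) * ‖V y‖ₑ := by
        rw [← lintegral_const_mul' _ _ ofReal_ne_top]
        simp_rw [ENNReal.ofReal_mul (by positivity : 0 ≤ a * Real.exp _),
          ENNReal.ofReal_mul (by positivity : 0 ≤ a), mul_assoc, Real.enorm_eq_ofReal_abs]
    _ ≤ ENNReal.ofReal a * (G / B * ⨆ z, ∫⁻ y in ball z 1, ‖V y‖ₑ) := by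
        gcongr
        exact lintegral_exp_neg_sq_norm_sub_mul_le (by positivity) x hV.enorm
    _ ≤ ENNReal.ofReal a * (G / B * (B ^ (1 - 1 / p₀) * locUnifNorm p₀ V)) := by
        gcongr
        exact iSup_setLIntegral_ball_le_locUnifNorm hp hV.aestronglyMeasurable
    _ = D * locUnifNorm p₀ V := by simp only [D, mul_assoc]
    _ ≤ ENNReal.ofReal (D.toReal + 1) * locUnifNorm p₀ V := by
        gcongr
        rw [ENNReal.le_ofReal_iff_toReal_le hD (by positivity)]
        linarith

theorem stmt17 {N : ℕ} (hN : 1 ≤ N) {p₀ : ℝ} (hp : 1 ≤ p₀) {t : ℝ} (ht : 0 < t) :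
    ∃ C : ℝ, 0 < C ∧
      ∀ V : EuclideanSpace ℝ (Fin N) → ℝ, Measurable V → locUnifNorm p₀ V < ⊤ →
        ∀ x : EuclideanSpace ℝ (Fin N),
          (∫⁻ y : EuclideanSpace ℝ (Fin N),
              ENNReal.ofReal ((4 * Real.pi * t) ^ (-(N : ℝ) / 2) *
                Real.exp (-‖x - y‖ ^ 2 / (4 * t)) * |V y|)) ≤
            ENNReal.ofReal C * locUnifNorm p₀ V :=
  stmt17_general hp ht
end
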